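/- arXiv:2605.25217 — 3 statements merged into one kernel-verified Lean document; each statement's English description precedes it below -/
import Mathlib

section
/- (Per-characteristic version of the main stabilization theorem, in original variables.) Let T > 0, let λ̂, ĝ : [0,T] → ℝ be continuous and f̂ continuous on {(σ,σ') ∈ [0,T]² : 0 ≤ σ' ≤ σ ≤ T}. Define Λ(σ̄) = ∫₀^{σ̄} T λ̂(T ξ) dξ for σ̄ ∈ [0,1], G(σ̄) = T ĝ(T σ̄) e^{Λ(σ̄)}, and F(σ̄, ȳ) = T² f̂(T σ̄, T ȳ) e^{Λ(σ̄) − Λ(ȳ)}. Assume k : 𝒯 → ℝ is C¹ on the triangle 𝒯 = {(σ̄, ȳ) ∈ [0,1]² : 0 ≤ ȳ ≤ σ̄ ≤ 1} and satisfies ∂k/∂σ̄ + ∂k/∂ȳ = ∫_{ȳ}^{σ̄} k(σ̄,ξ) F(ξ,ȳ) dξ − F(σ̄,ȳ) on 𝒯 and k(σ̄,0) = ∫₀^{σ̄} k(σ̄,ȳ) G(ȳ) dȳ − G(σ̄). Define the gain K(σ) = (1/T) k(1, σ/T) e^{Λ(σ/T) − Λ(1)} for σ ∈ [0,T]. Suppose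 u : [0,T] × [0,∞) → ℝ is continuous, C¹ on (0,T) × (0,∞), satisfies ∂u/∂t = ∂u/∂σ + λ̂(σ) u(σ,t) + ĝ(σ) u(0,t) + ∫₀^{σ} f̂(σ,σ') u(σ',t) dσ' on (0,T) × (0,∞), and the boundary feedback u(T, t) = ∫₀^{T} K(σ) u(σ, t) dσ for all t ≥ 0. Then u(σ, t) = 0 for every σ ∈ [0,T] and every t ≥ T. -/
open MeasureTheory intervalIntegral Set Metric Filter

/-- Shift a derivative-at-zero statement to a derivative at a general basepoint. -/
lemma hasDerivAt_shift {f : ℝ → ℝ} {d s₀ : ℝ}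
    (h : HasDerivAt (fun σ => f (s₀ + σ)) d 0) : HasDerivAt f d s₀ := by
  have h0 : HasDerivAt (fun σ => f (s₀ + σ)) d (-s₀ + s₀) := by simpa using h
  have h2 := HasDerivAt.comp_const_add (-s₀) s₀ h0
  have heq : (fun y => f (s₀ + (-s₀ + y))) = f := funext fun x => congrArg f (by ring)
  rwa [heq] at h2

/-- Fubini for a triangle, for continuous integrands. -/
lemma triangle_swap {H : ℝ → ℝ → ℝ} (hH : Continuous fun p : ℝ × ℝ => H p.1 p.2)
    {a b : ℝ} (hab : a ≤ b) :
    (∫ z in a..b, (∫ ξ in z..b, H ξ z)) = ∫ ξ in a..b, (∫ z in a..ξ, H ξ z) := by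
  set μ := volume.restrict (Ioc a b) with hμ
  haveI : IsFiniteMeasure μ := by
    constructor
    rw [hμ, Measure.restrict_apply_univ, Real.volume_Ioc]
    exact ENNReal.ofReal_lt_top
  set f : ℝ → ℝ → ℝ := fun z ξ => if z < ξ then H ξ z else 0 with hf
  have hmeasf : StronglyMeasurable (Function.uncurry f) := by
    have : Function.uncurry f = {q : ℝ × ℝ | q.1 < q.2}.indicator (fun q => H q.2 q.1) := by
      funext q
      simp [Function.uncurry, hf, Set.indicator_apply, Set.mem_setOf_eq]
    rw [this]
    exact (Continuous.stronglyMeasurable (by fun_prop)).indicator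
      (measurableSet_lt measurable_fst measurable_snd)
  obtain ⟨C, hC⟩ := (isCompact_Icc.prod isCompact_Icc).exists_bound_of_continuousOn
    (hH.continuousOn (s := Icc a b ×ˢ Icc a b))
  have hint : Integrable (Function.uncurry f) (μ.prod μ) := by
    refine ⟨hmeasf.aestronglyMeasurable, ?_⟩
    have hbound : ∀ᵐ q ∂(μ.prod μ), ‖Function.uncurry f q‖ ≤ C := by
      have : ∀ᵐ q ∂(μ.prod μ), q ∈ Ioc a b ×ˢ Ioc a b := by
        rw [hμ, Measure.prod_restrict]
        exact ae_restrict_mem (measurableSet_Ioc.prod measurableSet_Ioc)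
      filter_upwards [this] with q hq
      rcases hq with ⟨hq1, hq2⟩
      by_cases h : q.1 < q.2
      · simp only [Function.uncurry, hf, if_pos h]
        exact hC (q.2, q.1) ⟨Ioc_subset_Icc_self hq2, Ioc_subset_Icc_self hq1⟩
      · simp only [Function.uncurry, hf, if_neg h]
        simp only [norm_zero]
        exact le_trans (norm_nonneg _) (hC (a, a) ⟨⟨le_refl a, hab⟩, ⟨le_refl a, hab⟩⟩)
    exact (hasFiniteIntegral_const C).mono' hbound
  have swap := MeasureTheory.integral_integral_swap hint
  have hL : (∫ z in a..b, (∫ ξ in z..b, H ξ z)) = ∫ z, ∫ ξ, f z ξ ∂μ ∂μ := by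
    rw [intervalIntegral.integral_of_le hab]
    refine setIntegral_congr_fun measurableSet_Ioc (fun z hz => ?_)
    have h1 : (fun ξ => f z ξ) = fun ξ => (Ioi z).indicator (fun ξ => H ξ z) ξ := by
      funext ξ; simp [hf, Set.indicator_apply, Set.mem_Ioi]
    have inner : (∫ ξ, f z ξ ∂μ) = ∫ ξ in z..b, H ξ z := by
      rw [h1, hμ]
      rw [MeasureTheory.integral_indicator measurableSet_Ioi,
        Measure.restrict_restrict measurableSet_Ioi]
      have : Ioi z ∩ Ioc a b = Ioc z b := by
        ext x
        simp only [mem_inter_iff, mem_Ioi, mem_Ioc]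
        exact ⟨fun ⟨u1, u2⟩ => ⟨u1, u2.2⟩, fun ⟨u1, u2⟩ => ⟨u1, lt_trans hz.1 u1, u2⟩⟩
      rw [this, intervalIntegral.integral_of_le hz.2]
    rw [inner]
  have hR : (∫ ξ in a..b, (∫ z in a..ξ, H ξ z)) = ∫ ξ, ∫ z, f z ξ ∂μ ∂μ := by
    rw [intervalIntegral.integral_of_le hab]
    refine setIntegral_congr_fun measurableSet_Ioc (fun ξ hξ => ?_)
    have h1 : (fun z => f z ξ) = fun z => (Iio ξ).indicator (fun z => H ξ z) z := by
      funext z; simp [hf, Set.indicator_apply, Set.mem_Iio]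
    have inner : (∫ z, f z ξ ∂μ) = ∫ z in a..ξ, H ξ z := by
      rw [h1, hμ]
      rw [MeasureTheory.integral_indicator measurableSet_Iio,
        Measure.restrict_restrict measurableSet_Iio]
      have : Iio ξ ∩ Ioc a b = Ioo a ξ := by
        ext x
        simp only [mem_inter_iff, mem_Iio, mem_Ioc, mem_Ioo]
        exact ⟨fun ⟨u1, u2⟩ => ⟨u2.1, u1⟩, fun ⟨u1, u2⟩ => ⟨u2, u1, le_trans (le_of_lt u2) hξ.2⟩⟩
      rw [this, intervalIntegral.integral_of_le (le_of_lt hξ.1),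
        ← MeasureTheory.integral_Ioc_eq_integral_Ioo]
    rw [inner]
  rw [hL, hR, swap]

/-- Derivative of a shrinking interval integral. -/
lemma hasDerivAt_shrink {H : ℝ → ℝ → ℝ} (hH : Continuous fun p : ℝ × ℝ => H p.1 p.2)
    (c : ℝ) : HasDerivAt (fun s => ∫ z in (c - s)..c, H s z) (H 0 c) 0 := by
  rw [hasDerivAt_iff_isLittleO, Asymptotics.isLittleO_iff_forall_isBigOWith]
  intro ε hε
  rw [Asymptotics.isBigOWith_iff]
  have hcont : ContinuousAt (fun p : ℝ × ℝ => H p.1 p.2) (0, c) := hH.continuousAt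
  rw [Metric.continuousAt_iff] at hcont
  obtain ⟨δ, hδ, hδ'⟩ := hcont ε hε
  rw [Filter.eventually_iff_exists_mem]
  refine ⟨Metric.ball 0 (δ/2), Metric.ball_mem_nhds 0 (by positivity), fun s hs => ?_⟩
  have hsδ : |s| < δ/2 := by simpa [Real.dist_eq] using hs
  have h0 : (∫ z in (c - (0:ℝ))..c, H 0 z) = 0 := by simp
  have hconst : (s : ℝ) * H 0 c = ∫ z in (c - s)..c, H 0 c := by
    rw [intervalIntegral.integral_const, show c - (c - s) = s from by ring, smul_eq_mul]
  have key : (∫ z in (c - s)..c, H s z) - s * H 0 c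
      = ∫ z in (c - s)..c, (H s z - H 0 c) := by
    rw [hconst, ← intervalIntegral.integral_sub]
    · exact (Continuous.intervalIntegrable (by fun_prop) _ _)
    · exact intervalIntegrable_const
  have hb : ‖∫ z in (c - s)..c, (H s z - H 0 c)‖ ≤ ε * |c - (c - s)| := by
    apply intervalIntegral.norm_integral_le_of_norm_le_const
    intro z hz
    have hz' : |z - c| ≤ |s| := by
      rw [Set.uIoc] at hz
      rcases hz with ⟨h1, h2⟩
      have hmin : c - |s| ≤ min (c - s) c :=
        le_min (by linarith [le_abs_self s, neg_abs_le s]) (by linarith [abs_nonneg s])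
      have hmax : max (c - s) c ≤ c + |s| :=
        max_le (by linarith [le_abs_self s, neg_abs_le s]) (by linarith [abs_nonneg s])
      rw [abs_le]; constructor <;> [linarith [lt_of_le_of_lt hmin h1]; linarith [le_trans h2 hmax]]
    have hd : dist ((s, z) : ℝ × ℝ) (0, c) < δ := by
      rw [Prod.dist_eq]
      apply max_lt
      · simpa [Real.dist_eq] using lt_of_lt_of_le hsδ (by linarith)
      · rw [Real.dist_eq]
        calc |z - c| ≤ |s| := hz'
          _ < δ := by linarith
    have := hδ' hd
    rw [Real.dist_eq] at this
    exact le_of_lt this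
  calc ‖(∫ z in (c - s)..c, H s z) - (∫ z in (c - (0:ℝ))..c, H 0 z) - (s - 0) • H 0 c‖
      = ‖∫ z in (c - s)..c, (H s z - H 0 c)‖ := by rw [h0]; rw [show ((s:ℝ) - 0) • H 0 c = s * H 0 c by simp [smul_eq_mul]]; rw [← key]; ring_nf
    _ ≤ ε * |c - (c - s)| := hb
    _ = ε * ‖s - 0‖ := by rw [show c - (c - s) = s by ring]; simp [Real.norm_eq_abs]

lemma helper1 {M η e : ℝ} (hM : 0 ≤ M) (hη : 0 < η) (he : e ≤ η / (4*(M+1))) :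
    M * e ≤ η/4 := by
  have h1 : M * e ≤ M * (η/(4*(M+1))) := mul_le_mul_of_nonneg_left he hM
  have h2 : M * (η/(4*(M+1))) ≤ η/4 := by
    rw [mul_div_assoc', div_le_div_iff₀ (by positivity) (by norm_num)]
    nlinarith
  linarith

lemma helper2 {η S : ℝ} (hη : 0 < η) (hS : 0 ≤ S) : η / (2*(S+1)) * S ≤ η/2 := by
  rw [div_mul_eq_mul_div, div_le_div_iff₀ (by linarith) (by norm_num)]
  nlinarith

lemma helper3 {C η e : ℝ} (hC : 0 ≤ C) (hη : 0 < η) (he : e ≤ η / (3*(C+1))) :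
    C * e ≤ η/3 := by
  have h1 : C * e ≤ C * (η/(3*(C+1))) := mul_le_mul_of_nonneg_left he hC
  have h2 : C * (η/(3*(C+1))) ≤ η/3 := by
    rw [mul_div_assoc', div_le_div_iff₀ (by positivity) (by norm_num)]
    nlinarith
  linarith

set_option maxHeartbeats 2000000 in
lemma key_deriv
    (kc Fc : ℝ → ℝ → ℝ) (Gc : ℝ → ℝ) (wc : ℝ → ℝ → ℝ)
    (hkc : Continuous fun p : ℝ × ℝ => kc p.1 p.2)
    (hFc : Continuous fun p : ℝ × ℝ => Fc p.1 p.2)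
    (hGc : Continuous Gc)
    (hwc : Continuous fun p : ℝ × ℝ => wc p.1 p.2)
    (Rc : ℝ → ℝ → ℝ)
    (hRcdef : Rc = fun y τ => Gc y * wc 0 τ + ∫ ζ in (0:ℝ)..y, Fc y ζ * wc ζ τ)
    (hRc : Continuous fun p : ℝ × ℝ => Rc p.1 p.2)
    (Qc : ℝ → ℝ → ℝ)
    (hQcdef : Qc = fun x z => (∫ ξ in z..x, kc x ξ * Fc ξ z) - Fc x z)
    (hQc : Continuous fun p : ℝ × ℝ => Qc p.1 p.2)
    (hw_pde : ∀ x t : ℝ, 0 < x → x < 1 → 0 < t →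
      HasDerivAt (fun s => wc (x + s) (t - s))
        (-(Gc x * wc 0 t + ∫ y in (0:ℝ)..x, Fc x y * wc y t)) 0)
    (hkc_pde : ∀ x y : ℝ, 0 < y → y < x → x < 1 →
      HasDerivAt (fun s => kc (x + s) (y + s))
        ((∫ ξ in y..x, kc x ξ * Fc ξ y) - Fc x y) 0)
    (hkc_bc : ∀ x : ℝ, 0 ≤ x → x ≤ 1 →
      kc x 0 = (∫ y in (0:ℝ)..x, kc x y * Gc y) - Gc x)
    (t Mk MF Mw MR : ℝ)
    (hMknn : 0 ≤ Mk) (hMFnn : 0 ≤ MF) (hMwnn : 0 ≤ Mw) (hMRnn : 0 ≤ MR)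
    (hMk : ∀ a b : ℝ, 0 ≤ a → a ≤ 1 → 0 ≤ b → b ≤ 1 → |kc a b| ≤ Mk)
    (hMw : ∀ a b : ℝ, 0 ≤ a → a ≤ 1 → 0 ≤ b → b ≤ t + 1 → |wc a b| ≤ Mw)
    (hMR : ∀ y τ : ℝ, 0 ≤ y → y ≤ 1 → 0 ≤ τ → τ ≤ t + 1 → |Rc y τ| ≤ MR)
    (hQb : ∀ a b : ℝ, 0 ≤ b → b ≤ a → a ≤ 1 → |Qc a b| ≤ Mk * MF + MF)
    (hwcc : ∀ τfun xfun : ℝ → ℝ, Continuous τfun → Continuous xfun →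
      Continuous (fun s : ℝ => wc (xfun s) (τfun s)))
    (hkcc : ∀ af bf : ℝ → ℝ, Continuous af → Continuous bf →
      Continuous (fun s : ℝ => kc (af s) (bf s)))
    (ε : ℝ) (hεpos : 0 < ε) (hε1 : ε ≤ 1)
    (X τ : ℝ) (hεX : ε < X) (hX1 : X < 1) (hτ0 : 0 < τ) (hτt : τ ≤ t) :
    HasDerivAt (fun s => wc (X + s) (τ - s)
      - ∫ y in ε..(X + s), kc (X + s) y * wc y (τ - s))
      (wc 0 τ * kc X 0 - wc 0 τ * (∫ y in (0:ℝ)..ε, kc X y * Gc y)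
        - (∫ y in (0:ℝ)..ε, Fc X y * wc y τ)
        + (∫ ξ in ε..X, kc X ξ * (∫ ζ in (0:ℝ)..ε, Fc ξ ζ * wc ζ τ))
        - kc X ε * wc ε τ) 0 := by
  have hX0 : 0 < X := lt_trans hεpos hεX
  have hX0' : (0:ℝ) ≤ X := le_of_lt hX0
  set Θ : ℝ → ℝ → ℝ := fun s z => kc (X + s) (z + s) * wc (z + s) (τ - s) with hΘdef
  have hΘc : Continuous fun p : ℝ × ℝ => Θ p.1 p.2 := by
    apply Continuous.mul
    · exact hkc.comp ((continuous_const.add continuous_fst).prodMk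
        (continuous_snd.add continuous_fst))
    · exact hwc.comp ((continuous_snd.add continuous_fst).prodMk
        (continuous_const.sub continuous_fst))
  have hΘzc : ∀ s, Continuous fun z => Θ s z := fun s =>
    ((hkcc (fun _ => X + s) (fun z => z + s) continuous_const
      (continuous_id.add continuous_const)).mul
      (hwcc (fun _ => τ - s) (fun z => z + s) continuous_const
        (continuous_id.add continuous_const)))
  have hΘint : ∀ s a b : ℝ, IntervalIntegrable (fun z => Θ s z) volume a b :=
    fun s a b => (hΘzc s).intervalIntegrable a b
  have hfun : (fun s => wc (X + s) (τ - s) - ∫ y in ε..(X + s), kc (X + s) y * wc y (τ - s))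
      = fun s => wc (X + s) (τ - s) - (∫ z in ε..X, Θ s z) - (∫ z in (ε - s)..ε, Θ s z) := by
    funext s
    have hsub : (∫ y in ε..(X + s), kc (X + s) y * wc y (τ - s)) = ∫ z in (ε - s)..X, Θ s z := by
      have hh := intervalIntegral.integral_comp_add_right
        (a := ε - s) (b := X) (fun y => kc (X + s) y * wc y (τ - s)) s
      rw [sub_add_cancel] at hh
      exact hh.symm
    have hadj : (∫ z in (ε - s)..ε, Θ s z) + (∫ z in ε..X, Θ s z) = ∫ z in (ε - s)..X, Θ s z :=
      intervalIntegral.integral_add_adjacent_intervals (hΘint s _ _) (hΘint s _ _)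
    rw [hsub, ← hadj]
    ring
  rw [hfun]
  have h1 : HasDerivAt (fun s => wc (X + s) (τ - s)) (-(Rc X τ)) 0 := by
    have := hw_pde X τ hX0 hX1 hτ0
    simpa [hRcdef] using this
  have h3 : HasDerivAt (fun s => ∫ z in (ε - s)..ε, Θ s z) (Θ 0 ε) 0 :=
    hasDerivAt_shrink hΘc ε
  set δ0 := min (ε/2) (min ((1 - X)/2) (τ/2)) with hδ0def
  have hδ0pos : 0 < δ0 := lt_min (by positivity) (lt_min (by linarith) (by linarith))
  have hδ0ε : δ0 ≤ ε/2 := min_le_left _ _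
  have hδ0X : δ0 ≤ (1 - X)/2 := le_trans (min_le_right _ _) (min_le_left _ _)
  have hδ0τ : δ0 ≤ τ/2 := le_trans (min_le_right _ _) (min_le_right _ _)
  have hδ01 : δ0 ≤ 1/2 := le_trans hδ0ε (by linarith)
  set C0 := (Mk * MF + MF) * Mw + Mk * MR with hC0def
  have hQX : Continuous fun z : ℝ => Qc X z :=
    hQc.comp (continuous_const.prodMk continuous_id)
  have hFX : Continuous fun z : ℝ => Fc X z :=
    hFc.comp (continuous_const.prodMk continuous_id)
  have hkX : Continuous fun z : ℝ => kc X z :=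
    hkc.comp (continuous_const.prodMk continuous_id)
  have hwτ : Continuous fun z : ℝ => wc z τ :=
    hwcc (fun _ => τ) id continuous_const continuous_id
  have hRτ : Continuous fun z : ℝ => Rc z τ :=
    hRc.comp (continuous_id.prodMk continuous_const)
  have hdom := intervalIntegral.hasDerivAt_integral_of_dominated_loc_of_deriv_le
    (F := Θ)
    (F' := fun s z => Qc (X + s) (z + s) * wc (z + s) (τ - s)
      + kc (X + s) (z + s) * (-(Rc (z + s) (τ - s))))
    (x₀ := (0:ℝ)) (a := ε) (b := X) (bound := fun _ => C0) (μ := volume) (Metric.ball_mem_nhds (0:ℝ) hδ0pos)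
    ?hmeas ?hint ?hmeas' ?hbound ?hbint ?hdiff
  case hmeas => exact Filter.Eventually.of_forall fun s => (hΘzc s).aestronglyMeasurable
  case hint => exact hΘint 0 ε X
  case hmeas' =>
    apply Continuous.aestronglyMeasurable
    apply Continuous.add
    · exact ((hQc.comp ((continuous_const.add continuous_const).prodMk
        (continuous_id.add continuous_const))).mul
        (hwc.comp ((continuous_id.add continuous_const).prodMk continuous_const)))
    · exact ((hkc.comp ((continuous_const.add continuous_const).prodMk
        (continuous_id.add continuous_const))).mul
        ((hRc.comp ((continuous_id.add continuous_const).prodMk continuous_const)).neg))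
  case hbound =>
    apply MeasureTheory.ae_of_all
    intro z hz s hs
    rw [Set.uIoc_of_le (le_of_lt hεX)] at hz
    have hsb : |s| < δ0 := by
      rw [Metric.mem_ball, Real.dist_eq, sub_zero] at hs
      exact hs
    have hs1 : -(ε/2) ≤ s := by
      have := neg_abs_le s
      have h2 := neg_le_neg (le_of_lt (lt_of_lt_of_le hsb hδ0ε))
      linarith
    have hs2 : s ≤ (1 - X)/2 := le_trans (le_abs_self s) (le_of_lt (lt_of_lt_of_le hsb hδ0X))
    have hs3 : s ≤ τ/2 := le_trans (le_abs_self s) (le_of_lt (lt_of_lt_of_le hsb hδ0τ))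
    have hs4 : -(1/2) ≤ s := by
      have := neg_abs_le s
      have h2 := neg_le_neg (le_of_lt (lt_of_lt_of_le hsb hδ01))
      linarith
    have hzs0 : (0:ℝ) ≤ z + s := by
      have := hz.1
      linarith
    have hzsXs : z + s ≤ X + s := by linarith [hz.2]
    have hXs1 : X + s ≤ 1 := by linarith
    have hXs0 : (0:ℝ) ≤ X + s := le_trans hzs0 hzsXs
    have hzs1 : z + s ≤ 1 := le_trans hzsXs hXs1
    have hτs0 : (0:ℝ) ≤ τ - s := by linarith
    have hτs1 : τ - s ≤ t + 1 := by linarith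
    rw [Real.norm_eq_abs]
    calc |Qc (X + s) (z + s) * wc (z + s) (τ - s)
          + kc (X + s) (z + s) * (-(Rc (z + s) (τ - s)))|
        ≤ |Qc (X + s) (z + s) * wc (z + s) (τ - s)|
          + |kc (X + s) (z + s) * (-(Rc (z + s) (τ - s)))| := abs_add_le _ _
      _ ≤ (Mk * MF + MF) * Mw + Mk * MR := by
          apply add_le_add
          · rw [abs_mul]
            exact mul_le_mul (hQb (X + s) (z + s) hzs0 hzsXs hXs1)
              (hMw (z + s) (τ - s) hzs0 hzs1 hτs0 hτs1) (abs_nonneg _)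
              (by positivity)
          · rw [abs_mul, abs_neg]
            exact mul_le_mul (hMk (X + s) (z + s) hXs0 hXs1 hzs0 hzs1)
              (hMR (z + s) (τ - s) hzs0 hzs1 hτs0 hτs1) (abs_nonneg _) hMknn
      _ = C0 := by rw [hC0def]
  case hbint => exact intervalIntegrable_const
  case hdiff =>
    have hae : ∀ᵐ z : ℝ ∂volume, z ≠ X := by
      have hset : {z : ℝ | ¬ z ≠ X} = {X} := by
        ext z
        simp [not_not]
      rw [MeasureTheory.ae_iff, hset]
      exact Real.volume_singleton
    filter_upwards [hae] with z hzne hz s hs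
    rw [Set.uIoc_of_le (le_of_lt hεX)] at hz
    have hzX : z < X := lt_of_le_of_ne hz.2 hzne
    have hsb : |s| < δ0 := by
      rw [Metric.mem_ball, Real.dist_eq, sub_zero] at hs
      exact hs
    have hs1 : -(ε/2) ≤ s := by
      have := neg_abs_le s
      have h2 := neg_le_neg (le_of_lt (lt_of_lt_of_le hsb hδ0ε))
      linarith
    have hs2 : s < (1 - X)/2 := lt_of_le_of_lt (le_abs_self s) (lt_of_lt_of_le hsb hδ0X)
    have hs3 : s ≤ τ/2 := le_trans (le_abs_self s) (le_of_lt (lt_of_lt_of_le hsb hδ0τ))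
    have hzs0 : (0:ℝ) < z + s := by
      have := hz.1
      linarith
    have hzsXs : z + s < X + s := by linarith
    have hXs1 : X + s < 1 := by linarith
    have hτs0 : (0:ℝ) < τ - s := by linarith
    have hk1 : HasDerivAt (fun s' => kc (X + s') (z + s')) (Qc (X + s) (z + s)) s := by
      apply hasDerivAt_shift
      have hp := hkc_pde (X + s) (z + s) hzs0 hzsXs hXs1
      have heq2 : (fun σ => (fun s' => kc (X + s') (z + s')) (s + σ))
          = fun σ => kc ((X + s) + σ) ((z + s) + σ) := by
        funext σ
        show kc (X + (s + σ)) (z + (s + σ)) = kc ((X + s) + σ) ((z + s) + σ)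
        rw [show X + (s + σ) = (X + s) + σ by ring, show z + (s + σ) = (z + s) + σ by ring]
      rw [heq2]
      simpa [hQcdef] using hp
    have hw1 : HasDerivAt (fun s' => wc (z + s') (τ - s')) (-(Rc (z + s) (τ - s))) s := by
      apply hasDerivAt_shift
      have hp := hw_pde (z + s) (τ - s) hzs0 (lt_of_lt_of_le hzsXs (le_of_lt hXs1)) hτs0
      have heq2 : (fun σ => (fun s' => wc (z + s') (τ - s')) (s + σ))
          = fun σ => wc ((z + s) + σ) ((τ - s) - σ) := by
        funext σ
        show wc (z + (s + σ)) (τ - (s + σ)) = wc ((z + s) + σ) ((τ - s) - σ)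
        rw [show z + (s + σ) = (z + s) + σ by ring, show τ - (s + σ) = (τ - s) - σ by ring]
      rw [heq2]
      simpa [hRcdef] using hp
    exact hk1.mul hw1
  have h2d : HasDerivAt (fun s => ∫ z in ε..X, Θ s z)
      (∫ z in ε..X, (Qc X z * wc z τ + kc X z * (-(Rc z τ)))) 0 := by
    have := hdom.2
    simpa using this
  have htot := (h1.sub h2d).sub h3
  have halg : -(Rc X τ) - (∫ z in ε..X, (Qc X z * wc z τ + kc X z * (-(Rc z τ))))
      - Θ 0 ε = wc 0 τ * kc X 0 - wc 0 τ * (∫ y in (0:ℝ)..ε, kc X y * Gc y)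
        - (∫ y in (0:ℝ)..ε, Fc X y * wc y τ)
        + (∫ ξ in ε..X, kc X ξ * (∫ ζ in (0:ℝ)..ε, Fc ξ ζ * wc ζ τ))
        - kc X ε * wc ε τ := by
    have hΘ0 : Θ 0 ε = kc X ε * wc ε τ := by
      simp [hΘdef]
    -- auxiliary integrabilities
    have hintP : IntervalIntegrable (fun z => Qc X z * wc z τ) volume ε X :=
      (hQX.mul hwτ).intervalIntegrable _ _
    have hintM : IntervalIntegrable (fun z => kc X z * Rc z τ) volume ε X :=
      (hkX.mul hRτ).intervalIntegrable _ _
    have hintA : IntervalIntegrable (fun z => (Qc X z + Fc X z) * wc z τ) volume ε X :=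
      ((hQX.add hFX).mul hwτ).intervalIntegrable _ _
    have hintB : ∀ a b : ℝ, IntervalIntegrable (fun z => Fc X z * wc z τ) volume a b :=
      fun a b => (hFX.mul hwτ).intervalIntegrable _ _
    have hintC : IntervalIntegrable (fun z => kc X z * Gc z * wc 0 τ) volume ε X :=
      (((hkX.mul hGc).mul continuous_const)).intervalIntegrable _ _
    have hintD : IntervalIntegrable
        (fun z => kc X z * (Rc z τ - Gc z * wc 0 τ)) volume ε X :=
      ((hkX.mul (hRτ.sub (hGc.mul continuous_const)))).intervalIntegrable _ _
    have hintkG : ∀ a b : ℝ, IntervalIntegrable (fun y => kc X y * Gc y) volume a b :=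
      fun a b => ((hkX.mul hGc)).intervalIntegrable _ _
    have hintFw : ∀ ξ : ℝ, ∀ a b : ℝ,
        IntervalIntegrable (fun ζ => Fc ξ ζ * wc ζ τ) volume a b := fun ξ a b =>
      (((hFc.comp (continuous_const.prodMk continuous_id)).mul hwτ)).intervalIntegrable _ _
    have hintkI : IntervalIntegrable
        (fun z => kc X z * ∫ ζ in ε..z, Fc z ζ * wc ζ τ) volume ε X := by
      apply Continuous.intervalIntegrable
      apply hkX.mul
      apply intervalIntegral.continuous_parametric_intervalIntegral_of_continuous
        (f := fun (z : ℝ) ζ => Fc z ζ * wc ζ τ) (μ := volume) (a₀ := ε)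
      · exact (hFc.comp (continuous_fst.prodMk continuous_snd)).mul
          (hwc.comp (continuous_snd.prodMk continuous_const))
      · exact continuous_id
    -- step e0 : split P - M
    have e0 : (∫ z in ε..X, (Qc X z * wc z τ + kc X z * (-(Rc z τ))))
        = (∫ z in ε..X, Qc X z * wc z τ) - ∫ z in ε..X, kc X z * Rc z τ := by
      rw [← intervalIntegral.integral_sub hintP hintM]
      apply intervalIntegral.integral_congr
      intro z _
      ring
    -- step eP : P = A - B
    have eP : (∫ z in ε..X, Qc X z * wc z τ)
        = (∫ z in ε..X, (Qc X z + Fc X z) * wc z τ)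
          - ∫ z in ε..X, Fc X z * wc z τ := by
      rw [← intervalIntegral.integral_sub hintA (hintB ε X)]
      apply intervalIntegral.integral_congr
      intro z _
      ring
    -- step eM : M = C + D
    have eM : (∫ z in ε..X, kc X z * Rc z τ)
        = (∫ z in ε..X, kc X z * Gc z * wc 0 τ)
          + ∫ z in ε..X, kc X z * (Rc z τ - Gc z * wc 0 τ) := by
      rw [← intervalIntegral.integral_add hintC hintD]
      apply intervalIntegral.integral_congr
      intro z _
      ring
    -- Fubini for A
    have eA : (∫ z in ε..X, (Qc X z + Fc X z) * wc z τ)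
        = ∫ z in ε..X, kc X z * ∫ ζ in ε..z, Fc z ζ * wc ζ τ := by
      have hA'eq : ∀ z, (Qc X z + Fc X z) * wc z τ
          = ∫ ξ in z..X, kc X ξ * Fc ξ z * wc z τ := by
        intro z
        simp only [hQcdef]
        rw [sub_add_cancel, intervalIntegral.integral_mul_const]
      simp_rw [hA'eq]
      rw [triangle_swap (H := fun ξ z => kc X ξ * Fc ξ z * wc z τ) ?_ (le_of_lt hεX)]
      · apply intervalIntegral.integral_congr
        intro ξ _
        simp_rw [mul_assoc]
        rw [intervalIntegral.integral_const_mul]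
      · exact ((hkc.comp (continuous_const.prodMk continuous_fst)).mul
          (hFc.comp (continuous_fst.prodMk continuous_snd))).mul
          (hwc.comp (continuous_snd.prodMk continuous_const))
    -- D minus A
    have eDA : (∫ z in ε..X, kc X z * (Rc z τ - Gc z * wc 0 τ))
        - (∫ z in ε..X, (Qc X z + Fc X z) * wc z τ)
        = ∫ z in ε..X, kc X z * ∫ ζ in (0:ℝ)..ε, Fc z ζ * wc ζ τ := by
      rw [eA, ← intervalIntegral.integral_sub hintD hintkI]
      apply intervalIntegral.integral_congr
      intro z _
      have hadj : (∫ ζ in (0:ℝ)..ε, Fc z ζ * wc ζ τ) + (∫ ζ in ε..z, Fc z ζ * wc ζ τ)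
          = ∫ ζ in (0:ℝ)..z, Fc z ζ * wc ζ τ :=
        intervalIntegral.integral_add_adjacent_intervals (hintFw z _ _) (hintFw z _ _)
      simp only [hRcdef]
      rw [← hadj]
      ring
    -- C in terms of boundary condition
    have eC : (∫ z in ε..X, kc X z * Gc z * wc 0 τ)
        = (kc X 0 + Gc X - ∫ y in (0:ℝ)..ε, kc X y * Gc y) * wc 0 τ := by
      rw [intervalIntegral.integral_mul_const]
      congr 1
      have hadj : (∫ y in (0:ℝ)..ε, kc X y * Gc y) + (∫ y in ε..X, kc X y * Gc y)
          = ∫ y in (0:ℝ)..X, kc X y * Gc y :=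
        intervalIntegral.integral_add_adjacent_intervals (hintkG _ _) (hintkG _ _)
      have hbc := hkc_bc X hX0' (le_of_lt hX1)
      linarith
    -- B split
    have eB : (∫ z in ε..X, Fc X z * wc z τ)
        = (∫ z in (0:ℝ)..X, Fc X z * wc z τ) - ∫ z in (0:ℝ)..ε, Fc X z * wc z τ := by
      have hadj : (∫ z in (0:ℝ)..ε, Fc X z * wc z τ) + (∫ z in ε..X, Fc X z * wc z τ)
          = ∫ z in (0:ℝ)..X, Fc X z * wc z τ :=
        intervalIntegral.integral_add_adjacent_intervals (hintB _ _) (hintB _ _)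
      linarith
    have eR : Rc X τ = Gc X * wc 0 τ + ∫ z in (0:ℝ)..X, Fc X z * wc z τ := by
      simp only [hRcdef]
    rw [hΘ0, e0, eP, eM, eC, eB, eR]
    linarith [eDA]
  rwa [halg] at htot

set_option maxHeartbeats 4000000 in
theorem key_char
    (kc Fc : ℝ → ℝ → ℝ) (Gc : ℝ → ℝ) (wc : ℝ → ℝ → ℝ)
    (hkc : Continuous fun p : ℝ × ℝ => kc p.1 p.2)
    (hFc : Continuous fun p : ℝ × ℝ => Fc p.1 p.2)
    (hGc : Continuous Gc)
    (hwc : Continuous fun p : ℝ × ℝ => wc p.1 p.2)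
    (hw_pde : ∀ x t : ℝ, 0 < x → x < 1 → 0 < t →
      HasDerivAt (fun s => wc (x + s) (t - s))
        (-(Gc x * wc 0 t + ∫ y in (0:ℝ)..x, Fc x y * wc y t)) 0)
    (hkc_pde : ∀ x y : ℝ, 0 < y → y < x → x < 1 →
      HasDerivAt (fun s => kc (x + s) (y + s))
        ((∫ ξ in y..x, kc x ξ * Fc ξ y) - Fc x y) 0)
    (hkc_bc : ∀ x : ℝ, 0 ≤ x → x ≤ 1 →
      kc x 0 = (∫ y in (0:ℝ)..x, kc x y * Gc y) - Gc x)
    (hbc1 : ∀ τ : ℝ, 0 ≤ τ → wc 1 τ = ∫ y in (0:ℝ)..1, kc 1 y * wc y τ) :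
    ∀ x t : ℝ, 0 ≤ x → x ≤ 1 → 1 ≤ t → wc x t = 0 := by
  -- continuity helpers
  have hwcc : ∀ τfun xfun : ℝ → ℝ, Continuous τfun → Continuous xfun →
      Continuous (fun s : ℝ => wc (xfun s) (τfun s)) := by
    intro τf xf h1 h2
    exact hwc.comp (h2.prodMk h1)
  have hkcc : ∀ af bf : ℝ → ℝ, Continuous af → Continuous bf →
      Continuous (fun s : ℝ => kc (af s) (bf s)) := by
    intro af bf h1 h2
    exact hkc.comp (h1.prodMk h2)
  -- R and Q
  set Rc : ℝ → ℝ → ℝ := fun y τ => Gc y * wc 0 τ + ∫ ζ in (0:ℝ)..y, Fc y ζ * wc ζ τ with hRcdef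
  have hRc : Continuous fun p : ℝ × ℝ => Rc p.1 p.2 := by
    apply Continuous.add
    · exact (hGc.comp continuous_fst).mul (hwc.comp (continuous_const.prodMk continuous_snd))
    · apply intervalIntegral.continuous_parametric_intervalIntegral_of_continuous
        (f := fun (p : ℝ × ℝ) ζ => Fc p.1 ζ * wc ζ p.2) (μ := volume)
      · apply Continuous.mul
        · exact hFc.comp ((continuous_fst.comp continuous_fst).prodMk continuous_snd)
        · exact hwc.comp (continuous_snd.prodMk (continuous_snd.comp continuous_fst))
      · exact continuous_fst
  set Qc : ℝ → ℝ → ℝ := fun x z => (∫ ξ in z..x, kc x ξ * Fc ξ z) - Fc x z with hQcdef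
  have hint0 : ∀ (p : ℝ × ℝ) (a b : ℝ), IntervalIntegrable (fun ξ => kc p.1 ξ * Fc ξ p.2) volume a b := by
    intro p a b
    exact ((hkcc (fun _ => p.1) id continuous_const continuous_id).mul
      (hFc.comp (continuous_id.prodMk continuous_const))).intervalIntegrable a b
  have hQc : Continuous fun p : ℝ × ℝ => Qc p.1 p.2 := by
    have hcore : Continuous fun q : (ℝ × ℝ) × ℝ => kc q.1.1 q.2 * Fc q.2 q.1.2 := by
      exact (hkc.comp ((continuous_fst.comp continuous_fst).prodMk continuous_snd)).mul
        (hFc.comp (continuous_snd.prodMk (continuous_snd.comp continuous_fst)))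
    have h1 : Continuous fun p : ℝ × ℝ => ∫ ξ in (0:ℝ)..p.1, kc p.1 ξ * Fc ξ p.2 :=
      intervalIntegral.continuous_parametric_intervalIntegral_of_continuous
        (f := fun (p : ℝ × ℝ) ξ => kc p.1 ξ * Fc ξ p.2) (μ := volume) hcore continuous_fst
    have h2 : Continuous fun p : ℝ × ℝ => ∫ ξ in (0:ℝ)..p.2, kc p.1 ξ * Fc ξ p.2 :=
      intervalIntegral.continuous_parametric_intervalIntegral_of_continuous
        (f := fun (p : ℝ × ℝ) ξ => kc p.1 ξ * Fc ξ p.2) (μ := volume) hcore continuous_snd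
    have heq : (fun p : ℝ × ℝ => Qc p.1 p.2)
        = fun p : ℝ × ℝ => ((∫ ξ in (0:ℝ)..p.1, kc p.1 ξ * Fc ξ p.2)
            - ∫ ξ in (0:ℝ)..p.2, kc p.1 ξ * Fc ξ p.2) - Fc p.1 p.2 := by
      funext p
      have := intervalIntegral.integral_add_adjacent_intervals
        (hint0 p 0 p.2) (hint0 p p.2 p.1)
      simp only [hQcdef]
      rw [← this]
      ring
    rw [heq]
    exact (h1.sub h2).sub hFc
  -- the transformed function
  set v : ℝ → ℝ → ℝ := fun x t => wc x t - ∫ y in (0:ℝ)..x, kc x y * wc y t with hvdef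
  have hv : Continuous fun p : ℝ × ℝ => v p.1 p.2 := by
    apply hwc.sub
    apply intervalIntegral.continuous_parametric_intervalIntegral_of_continuous
      (f := fun (p : ℝ × ℝ) y => kc p.1 y * wc y p.2) (μ := volume)
    · exact (hkc.comp ((continuous_fst.comp continuous_fst).prodMk continuous_snd)).mul
        (hwc.comp (continuous_snd.prodMk (continuous_snd.comp continuous_fst)))
    · exact continuous_fst
  -- constancy along characteristics
  have charConst : ∀ x t S : ℝ, 0 < x → 0 ≤ S → x + S < 1 → S < t →
      v (x + S) (t - S) = v x t := by
    intro x t S hx hS hxS hSt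
    have ht : 0 < t := lt_of_le_of_lt hS hSt
    have htS : 0 < t - S := by linarith
    obtain ⟨Mk0, hMk0⟩ := (isCompact_Icc.prod isCompact_Icc).exists_bound_of_continuousOn
      (hkc.continuousOn (s := Icc (0:ℝ) 1 ×ˢ Icc (0:ℝ) 1))
    set Mk := max Mk0 0 with hMkdef
    have hMk : ∀ a b : ℝ, 0 ≤ a → a ≤ 1 → 0 ≤ b → b ≤ 1 → |kc a b| ≤ Mk := fun a b h1 h2 h3 h4 =>
      le_trans (hMk0 (a,b) ⟨⟨h1,h2⟩,⟨h3,h4⟩⟩) (le_max_left _ _)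
    have hMknn : 0 ≤ Mk := le_max_right _ _
    obtain ⟨MF0, hMF0⟩ := (isCompact_Icc.prod isCompact_Icc).exists_bound_of_continuousOn
      (hFc.continuousOn (s := Icc (0:ℝ) 1 ×ˢ Icc (0:ℝ) 1))
    set MF := max MF0 0 with hMFdef
    have hMF : ∀ a b : ℝ, 0 ≤ a → a ≤ 1 → 0 ≤ b → b ≤ 1 → |Fc a b| ≤ MF := fun a b h1 h2 h3 h4 =>
      le_trans (hMF0 (a,b) ⟨⟨h1,h2⟩,⟨h3,h4⟩⟩) (le_max_left _ _)
    have hMFnn : 0 ≤ MF := le_max_right _ _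
    obtain ⟨MG0, hMG0⟩ := isCompact_Icc.exists_bound_of_continuousOn
      (hGc.continuousOn (s := Icc (0:ℝ) 1))
    set MG := max MG0 0 with hMGdef
    have hMG : ∀ a : ℝ, 0 ≤ a → a ≤ 1 → |Gc a| ≤ MG := fun a h1 h2 =>
      le_trans (hMG0 a ⟨h1,h2⟩) (le_max_left _ _)
    have hMGnn : 0 ≤ MG := le_max_right _ _
    obtain ⟨Mw0, hMw0⟩ := (isCompact_Icc.prod isCompact_Icc).exists_bound_of_continuousOn
      (hwc.continuousOn (s := Icc (0:ℝ) 1 ×ˢ Icc (0:ℝ) (t+1)))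
    set Mw := max Mw0 0 with hMwdef
    have hMw : ∀ a b : ℝ, 0 ≤ a → a ≤ 1 → 0 ≤ b → b ≤ t + 1 → |wc a b| ≤ Mw := fun a b h1 h2 h3 h4 =>
      le_trans (hMw0 (a,b) ⟨⟨h1,h2⟩,⟨h3,h4⟩⟩) (le_max_left _ _)
    have hMwnn : 0 ≤ Mw := le_max_right _ _
    set MR := MG * Mw + MF * Mw with hMRdef
    have hMRnn : 0 ≤ MR := by positivity
    have hMR : ∀ y τ : ℝ, 0 ≤ y → y ≤ 1 → 0 ≤ τ → τ ≤ t + 1 → |Rc y τ| ≤ MR := by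
      intro y τ h1 h2 h3 h4
      simp only [hRcdef]
      have hb1 : |Gc y * wc 0 τ| ≤ MG * Mw := by
        rw [abs_mul]
        exact mul_le_mul (hMG y h1 h2) (hMw 0 τ (le_refl 0) zero_le_one h3 h4) (abs_nonneg _) hMGnn
      have hb2 : |∫ ζ in (0:ℝ)..y, Fc y ζ * wc ζ τ| ≤ MF * Mw := by
        have hh := intervalIntegral.norm_integral_le_of_norm_le_const
          (C := MF * Mw) (f := fun ζ => Fc y ζ * wc ζ τ) (a := 0) (b := y) ?_
        · rw [Real.norm_eq_abs, sub_zero, abs_of_nonneg h1] at hh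
          calc |∫ ζ in (0:ℝ)..y, Fc y ζ * wc ζ τ| ≤ MF * Mw * y := hh
            _ ≤ MF * Mw * 1 := by
                apply mul_le_mul_of_nonneg_left h2 (by positivity)
            _ = MF * Mw := mul_one _
        · intro ζ hζ
          rw [Set.uIoc_of_le h1] at hζ
          rw [Real.norm_eq_abs, abs_mul]
          exact mul_le_mul (hMF y ζ h1 h2 (le_of_lt hζ.1) (le_trans hζ.2 h2))
            (hMw ζ τ (le_of_lt hζ.1) (le_trans hζ.2 h2) h3 h4) (abs_nonneg _) hMFnn
      calc |Gc y * wc 0 τ + ∫ ζ in (0:ℝ)..y, Fc y ζ * wc ζ τ|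
          ≤ |Gc y * wc 0 τ| + |∫ ζ in (0:ℝ)..y, Fc y ζ * wc ζ τ| := abs_add_le _ _
        _ ≤ MG * Mw + MF * Mw := add_le_add hb1 hb2
    have hQb : ∀ a b : ℝ, 0 ≤ b → b ≤ a → a ≤ 1 → |Qc a b| ≤ Mk * MF + MF := by
      intro a b h1 h2 h3
      simp only [hQcdef]
      have ha0 : 0 ≤ a := le_trans h1 h2
      have hb1 : |∫ ξ in b..a, kc a ξ * Fc ξ b| ≤ Mk * MF := by
        have hh := intervalIntegral.norm_integral_le_of_norm_le_const
          (C := Mk * MF) (f := fun ξ => kc a ξ * Fc ξ b) (a := b) (b := a) ?_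
        · rw [Real.norm_eq_abs] at hh
          calc |∫ ξ in b..a, kc a ξ * Fc ξ b| ≤ Mk * MF * |a - b| := hh
            _ ≤ Mk * MF * 1 := by
                apply mul_le_mul_of_nonneg_left _ (by positivity)
                rw [abs_of_nonneg (by linarith)]
                linarith
            _ = Mk * MF := mul_one _
        · intro ξ hξ
          rw [Set.uIoc_of_le h2] at hξ
          have hξ1 : 0 ≤ ξ := le_trans h1 (le_of_lt hξ.1)
          have hξ2 : ξ ≤ 1 := le_trans hξ.2 h3
          rw [Real.norm_eq_abs, abs_mul]
          exact mul_le_mul (hMk a ξ ha0 h3 hξ1 hξ2)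
            (hMF ξ b hξ1 hξ2 h1 (le_trans h2 h3)) (abs_nonneg _) hMknn
      calc |(∫ ξ in b..a, kc a ξ * Fc ξ b) - Fc a b|
          ≤ |∫ ξ in b..a, kc a ξ * Fc ξ b| + |Fc a b| := abs_sub _ _
        _ ≤ Mk * MF + MF := add_le_add hb1 (hMF a b ha0 h3 h1 (le_trans h2 h3))
    suffices hsuff : ∀ η : ℝ, 0 < η → |v (x + S) (t - S) - v x t| ≤ η by
      have h0 : |v (x + S) (t - S) - v x t| ≤ 0 := by
        apply le_of_forall_pos_le_add
        intro η hη
        simpa using hsuff η hη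
      have h1 := le_antisymm h0 (abs_nonneg _)
      have h2 := abs_eq_zero.mp h1
      linarith [h2]
    intro η hη
    set η1 := η / (2 * (S + 1)) with hη1def
    have hη1 : 0 < η1 := div_pos hη (by linarith)
    have huck := (isCompact_Icc.prod isCompact_Icc).uniformContinuousOn_of_continuous
      (hkc.continuousOn (s := Icc (0:ℝ) 1 ×ˢ Icc (0:ℝ) 1))
    rw [Metric.uniformContinuousOn_iff] at huck
    obtain ⟨δk, hδk, hδkp⟩ := huck (η1 / (3 * (Mw + 1))) (by positivity)
    have hucw := (isCompact_Icc.prod isCompact_Icc).uniformContinuousOn_of_continuous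
      (hwc.continuousOn (s := Icc (0:ℝ) 1 ×ˢ Icc (0:ℝ) (t+1)))
    rw [Metric.uniformContinuousOn_iff] at hucw
    obtain ⟨δw, hδw, hδwp⟩ := hucw (η1 / (3 * (Mk + 1))) (by positivity)
    set Cq := Mw * (Mk * MG) + MF * Mw + Mk * (MF * Mw) with hCqdef
    have hCqnn : 0 ≤ Cq := by positivity
    set ε := min (x/2) (min (δk/2) (min (δw/2) (min (η1/(3*(Cq+1)))
      (min 1 (η/(4*(Mk*Mw+1))))))) with hεdef
    have hεpos : 0 < ε := by
      refine lt_min (by linarith) (lt_min (by linarith) (lt_min (by linarith)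
        (lt_min (by positivity) (lt_min one_pos (by positivity)))))
    have hεx : ε < x := lt_of_le_of_lt (min_le_left _ _) (by linarith)
    have hεδk : ε < δk :=
      lt_of_le_of_lt (le_trans (min_le_right _ _) (min_le_left _ _)) (by linarith)
    have hεδw : ε < δw :=
      lt_of_le_of_lt (le_trans (min_le_right _ _) (le_trans (min_le_right _ _)
        (min_le_left _ _))) (by linarith)
    have hεq : ε ≤ η1/(3*(Cq+1)) :=
      le_trans (min_le_right _ _) (le_trans (min_le_right _ _)
        (le_trans (min_le_right _ _) (min_le_left _ _)))
    have hε1 : ε ≤ 1 :=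
      le_trans (min_le_right _ _) (le_trans (min_le_right _ _)
        (le_trans (min_le_right _ _) (le_trans (min_le_right _ _) (min_le_left _ _))))
    have hεe : ε ≤ η/(4*(Mk*Mw+1)) :=
      le_trans (min_le_right _ _) (le_trans (min_le_right _ _)
        (le_trans (min_le_right _ _) (le_trans (min_le_right _ _) (min_le_right _ _))))
    set E : ℝ → ℝ → ℝ := fun X τ =>
      wc 0 τ * kc X 0 - wc 0 τ * (∫ y in (0:ℝ)..ε, kc X y * Gc y)
        - (∫ y in (0:ℝ)..ε, Fc X y * wc y τ)
        + (∫ ξ in ε..X, kc X ξ * (∫ ζ in (0:ℝ)..ε, Fc ξ ζ * wc ζ τ))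
        - kc X ε * wc ε τ with hEdef
    have KEY : ∀ X τ : ℝ, ε < X → X < 1 → 0 < τ → τ ≤ t →
        HasDerivAt (fun s => wc (X + s) (τ - s)
          - ∫ y in ε..(X + s), kc (X + s) y * wc y (τ - s)) (E X τ) 0 := by
      intro X τ h1 h2 h3 h4
      have := key_deriv kc Fc Gc wc hkc hFc hGc hwc Rc hRcdef hRc Qc hQcdef hQc
        hw_pde hkc_pde hkc_bc t Mk MF Mw MR hMknn hMFnn hMwnn hMRnn
        hMk hMw hMR hQb hwcc hkcc ε hεpos hε1 X τ h1 h2 h3 h4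
      exact this
    have EB : ∀ X τ : ℝ, ε < X → X < 1 → 0 < τ → τ ≤ t → |E X τ| ≤ η1 := by
      intro X τ hεX hX1 hτ0 hτt
      have hX0 : (0:ℝ) ≤ X := le_trans (le_of_lt hεpos) (le_of_lt hεX)
      have hX1' : X ≤ 1 := le_of_lt hX1
      have hτ0' : (0:ℝ) ≤ τ := le_of_lt hτ0
      have hτ1 : τ ≤ t + 1 := by linarith
      have t1 : |wc 0 τ| ≤ Mw := hMw 0 τ le_rfl zero_le_one hτ0' hτ1
      have t4 : |kc X ε| ≤ Mk := hMk X ε hX0 hX1' (le_of_lt hεpos) hε1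
      have t2 : |kc X 0 - kc X ε| ≤ η1 / (3*(Mw+1)) := by
        have hd : dist ((X, (0:ℝ)) : ℝ × ℝ) ((X, ε) : ℝ × ℝ) < δk := by
          rw [Prod.dist_eq]
          have h1 : dist X X = 0 := dist_self X
          have h2 : dist (0:ℝ) ε = ε := by
            rw [Real.dist_eq, abs_sub_comm, sub_zero, abs_of_pos hεpos]
          rw [h1, h2]
          simpa [max_eq_right (le_of_lt hεpos)] using hεδk
        have := hδkp ((X, (0:ℝ))) ⟨⟨hX0, hX1'⟩, ⟨le_rfl, zero_le_one⟩⟩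
          ((X, ε)) ⟨⟨hX0, hX1'⟩, ⟨le_of_lt hεpos, hε1⟩⟩ hd
        rw [Real.dist_eq] at this
        exact le_of_lt this
      have t3 : |wc 0 τ - wc ε τ| ≤ η1 / (3*(Mk+1)) := by
        have hd : dist (((0:ℝ), τ) : ℝ × ℝ) ((ε, τ) : ℝ × ℝ) < δw := by
          rw [Prod.dist_eq]
          have h1 : dist τ τ = 0 := dist_self τ
          have h2 : dist (0:ℝ) ε = ε := by
            rw [Real.dist_eq, abs_sub_comm, sub_zero, abs_of_pos hεpos]
          rw [h1, h2]
          simpa [max_eq_left (le_of_lt hεpos)] using hεδw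
        have := hδwp (((0:ℝ), τ)) ⟨⟨le_rfl, zero_le_one⟩, ⟨hτ0', hτ1⟩⟩
          ((ε, τ)) ⟨⟨le_of_lt hεpos, hε1⟩, ⟨hτ0', hτ1⟩⟩ hd
        rw [Real.dist_eq] at this
        exact le_of_lt this
      have b1 : |wc 0 τ * (kc X 0 - kc X ε)| ≤ η1/3 := by
        rw [abs_mul]
        calc |wc 0 τ| * |kc X 0 - kc X ε| ≤ Mw * (η1/(3*(Mw+1))) :=
              mul_le_mul t1 t2 (abs_nonneg _) hMwnn
          _ ≤ η1/3 := helper3 hMwnn hη1 le_rfl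
      have b2 : |kc X ε * (wc 0 τ - wc ε τ)| ≤ η1/3 := by
        rw [abs_mul]
        calc |kc X ε| * |wc 0 τ - wc ε τ| ≤ Mk * (η1/(3*(Mk+1))) :=
              mul_le_mul t4 t3 (abs_nonneg _) hMknn
          _ ≤ η1/3 := helper3 hMknn hη1 le_rfl
      have b3 : |wc 0 τ * (∫ y in (0:ℝ)..ε, kc X y * Gc y)| ≤ Mw * (Mk * MG) * ε := by
        rw [abs_mul]
        have hI : |∫ y in (0:ℝ)..ε, kc X y * Gc y| ≤ Mk * MG * ε := by
          have hh := intervalIntegral.norm_integral_le_of_norm_le_const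
            (C := Mk * MG) (f := fun y => kc X y * Gc y) (a := 0) (b := ε) ?_
          · rwa [Real.norm_eq_abs, sub_zero, abs_of_pos hεpos] at hh
          · intro y hy
            rw [Set.uIoc_of_le (le_of_lt hεpos)] at hy
            have hy1 : 0 ≤ y := le_of_lt hy.1
            have hy2 : y ≤ 1 := le_trans hy.2 hε1
            rw [Real.norm_eq_abs, abs_mul]
            exact mul_le_mul (hMk X y hX0 hX1' hy1 hy2) (hMG y hy1 hy2) (abs_nonneg _) hMknn
        calc |wc 0 τ| * |∫ y in (0:ℝ)..ε, kc X y * Gc y| ≤ Mw * (Mk * MG * ε) :=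
              mul_le_mul t1 hI (abs_nonneg _) hMwnn
          _ = Mw * (Mk * MG) * ε := by ring
      have b4 : |∫ y in (0:ℝ)..ε, Fc X y * wc y τ| ≤ MF * Mw * ε := by
        have hh := intervalIntegral.norm_integral_le_of_norm_le_const
          (C := MF * Mw) (f := fun y => Fc X y * wc y τ) (a := 0) (b := ε) ?_
        · rwa [Real.norm_eq_abs, sub_zero, abs_of_pos hεpos] at hh
        · intro y hy
          rw [Set.uIoc_of_le (le_of_lt hεpos)] at hy
          have hy1 : 0 ≤ y := le_of_lt hy.1
          have hy2 : y ≤ 1 := le_trans hy.2 hε1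
          rw [Real.norm_eq_abs, abs_mul]
          exact mul_le_mul (hMF X y hX0 hX1' hy1 hy2) (hMw y τ hy1 hy2 hτ0' hτ1)
            (abs_nonneg _) hMFnn
      have b5 : |∫ ξ in ε..X, kc X ξ * (∫ ζ in (0:ℝ)..ε, Fc ξ ζ * wc ζ τ)| ≤ Mk * (MF * Mw) * ε := by
        have hh := intervalIntegral.norm_integral_le_of_norm_le_const
          (C := Mk * (MF * Mw * ε)) (f := fun ξ => kc X ξ * (∫ ζ in (0:ℝ)..ε, Fc ξ ζ * wc ζ τ))
          (a := ε) (b := X) ?_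
        · rw [Real.norm_eq_abs] at hh
          calc |∫ ξ in ε..X, kc X ξ * (∫ ζ in (0:ℝ)..ε, Fc ξ ζ * wc ζ τ)|
              ≤ Mk * (MF * Mw * ε) * |X - ε| := hh
            _ ≤ Mk * (MF * Mw * ε) * 1 := by
                apply mul_le_mul_of_nonneg_left _ (by positivity)
                rw [abs_of_nonneg (by linarith)]
                linarith
            _ = Mk * (MF * Mw) * ε := by ring
        · intro ξ hξ
          rw [Set.uIoc_of_le (le_of_lt hεX)] at hξ
          have hξ1 : 0 ≤ ξ := le_trans (le_of_lt hεpos) (le_of_lt hξ.1)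
          have hξ2 : ξ ≤ 1 := le_trans hξ.2 hX1'
          have hI2 : |∫ ζ in (0:ℝ)..ε, Fc ξ ζ * wc ζ τ| ≤ MF * Mw * ε := by
            have hh2 := intervalIntegral.norm_integral_le_of_norm_le_const
              (C := MF * Mw) (f := fun ζ => Fc ξ ζ * wc ζ τ) (a := 0) (b := ε) ?_
            · rwa [Real.norm_eq_abs, sub_zero, abs_of_pos hεpos] at hh2
            · intro ζ hζ
              rw [Set.uIoc_of_le (le_of_lt hεpos)] at hζ
              have hζ1 : 0 ≤ ζ := le_of_lt hζ.1
              have hζ2 : ζ ≤ 1 := le_trans hζ.2 hε1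
              rw [Real.norm_eq_abs, abs_mul]
              exact mul_le_mul (hMF ξ ζ hξ1 hξ2 hζ1 hζ2) (hMw ζ τ hζ1 hζ2 hτ0' hτ1)
                (abs_nonneg _) hMFnn
          rw [Real.norm_eq_abs, abs_mul]
          exact mul_le_mul (hMk X ξ hX0 hX1' hξ1 hξ2) hI2 (abs_nonneg _) hMknn
      have hCqε : Cq * ε ≤ η1/3 := helper3 hCqnn hη1 hεq
      have hCqε' : Mw * (Mk * MG) * ε + MF * Mw * ε + Mk * (MF * Mw) * ε ≤ η1/3 := by
        calc Mw * (Mk * MG) * ε + MF * Mw * ε + Mk * (MF * Mw) * ε = Cq * ε := by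
              rw [hCqdef]; ring
          _ ≤ η1/3 := hCqε
      have hEeq : E X τ = wc 0 τ * (kc X 0 - kc X ε) + kc X ε * (wc 0 τ - wc ε τ)
          - wc 0 τ * (∫ y in (0:ℝ)..ε, kc X y * Gc y)
          - (∫ y in (0:ℝ)..ε, Fc X y * wc y τ)
          + (∫ ξ in ε..X, kc X ξ * (∫ ζ in (0:ℝ)..ε, Fc ξ ζ * wc ζ τ)) := by
        simp only [hEdef]
        ring
      rw [hEeq]
      have m1 := abs_le.mp b1
      have m2 := abs_le.mp b2
      have m3 := abs_le.mp b3
      have m4 := abs_le.mp b4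
      have m5 := abs_le.mp b5
      rw [abs_le]
      constructor
      · linarith [m1.1, m2.1, m3.2, m4.2, m5.1]
      · linarith [m1.2, m2.2, m3.1, m4.1, m5.2]
    set Ψ : ℝ → ℝ := fun s => wc (x + s) (t - s)
      - ∫ y in ε..(x + s), kc (x + s) y * wc y (t - s) with hΨdef
    have hΨd : ∀ s ∈ Icc (0:ℝ) S, HasDerivWithinAt Ψ (E (x + s) (t - s)) (Icc 0 S) s := by
      intro s hs
      apply HasDerivAt.hasDerivWithinAt
      apply hasDerivAt_shift
      have hK := KEY (x + s) (t - s) (lt_of_lt_of_le hεx (by linarith [hs.1]))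
        (by linarith [hs.2]) (by linarith [hs.2]) (by linarith [hs.1])
      have heq : (fun σ => Ψ (s + σ)) = fun σ => wc ((x+s)+σ) ((t-s)-σ)
          - ∫ y in ε..((x+s)+σ), kc ((x+s)+σ) y * wc y ((t-s)-σ) := by
        funext σ
        simp only [hΨdef]
        rw [show x + (s + σ) = (x+s)+σ by ring, show t - (s + σ) = (t-s)-σ by ring]
      rw [heq]
      exact hK
    have hmem0 : (0:ℝ) ∈ Icc (0:ℝ) S := ⟨le_refl 0, hS⟩
    have hmemS : S ∈ Icc (0:ℝ) S := ⟨hS, le_refl S⟩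
    have hMVT := Convex.norm_image_sub_le_of_norm_hasDerivWithin_le hΨd
      (fun s hs => by
        rw [Real.norm_eq_abs]
        exact EB (x+s) (t-s) (lt_of_lt_of_le hεx (by linarith [hs.1]))
          (by linarith [hs.2]) (by linarith [hs.2]) (by linarith [hs.1]))
      (convex_Icc 0 S) hmem0 hmemS
    have hMVT' : |Ψ S - Ψ 0| ≤ η1 * S := by
      rw [Real.norm_eq_abs, Real.norm_eq_abs] at hMVT
      calc |Ψ S - Ψ 0| ≤ η1 * |S - 0| := hMVT
        _ = η1 * S := by rw [sub_zero, abs_of_nonneg hS]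
    have hcor : ∀ X τ : ℝ, ε ≤ X → X ≤ 1 → 0 ≤ τ → τ ≤ t →
        |v X τ - (wc X τ - ∫ y in ε..X, kc X y * wc y τ)| ≤ Mk * Mw * ε := by
      intro X τ h1 h2 h3 h4
      have hX0 : (0:ℝ) ≤ X := le_trans (le_of_lt hεpos) h1
      have hsplit : (∫ y in (0:ℝ)..X, kc X y * wc y τ)
          = (∫ y in (0:ℝ)..ε, kc X y * wc y τ) + ∫ y in ε..X, kc X y * wc y τ := by
        symm
        apply intervalIntegral.integral_add_adjacent_intervals
        · exact ((hkcc (fun _ => X) id continuous_const continuous_id).mul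
            (hwcc (fun _ => τ) id continuous_const continuous_id)).intervalIntegrable _ _
        · exact ((hkcc (fun _ => X) id continuous_const continuous_id).mul
            (hwcc (fun _ => τ) id continuous_const continuous_id)).intervalIntegrable _ _
      have heq : v X τ - (wc X τ - ∫ y in ε..X, kc X y * wc y τ)
          = -(∫ y in (0:ℝ)..ε, kc X y * wc y τ) := by
        simp only [hvdef]
        rw [hsplit]
        ring
      rw [heq, abs_neg]
      have hh := intervalIntegral.norm_integral_le_of_norm_le_const
        (C := Mk * Mw) (f := fun y => kc X y * wc y τ) (a := 0) (b := ε) ?_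
      · rw [Real.norm_eq_abs, sub_zero, abs_of_pos hεpos] at hh
        exact hh
      · intro y hy
        rw [Set.uIoc_of_le (le_of_lt hεpos)] at hy
        rw [Real.norm_eq_abs, abs_mul]
        have hy1 : 0 ≤ y := le_of_lt hy.1
        have hy2 : y ≤ 1 := le_trans hy.2 hε1
        exact mul_le_mul (hMk X y hX0 h2 hy1 hy2) (hMw y τ hy1 hy2 h3 (by linarith))
          (abs_nonneg _) hMknn
    have hΨS : Ψ S = wc (x+S) (t-S) - ∫ y in ε..(x+S), kc (x+S) y * wc y (t-S) := rfl
    have hΨ0 : Ψ 0 = wc x t - ∫ y in ε..x, kc x y * wc y t := by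
      simp only [hΨdef, add_zero, sub_zero]
    have hc1 := hcor (x+S) (t-S) (by linarith [le_of_lt hεx]) (by linarith) (by linarith)
      (by linarith)
    have hc2 := hcor x t (le_of_lt hεx) (by linarith) (by linarith) (le_refl t)
    rw [← hΨS] at hc1
    rw [← hΨ0] at hc2
    have hMM : Mk * Mw * ε ≤ η / 4 := helper1 (by positivity) hη hεe
    have hη1S : η1 * S ≤ η / 2 := by
      rw [hη1def]
      exact helper2 hη hS
    calc |v (x+S) (t-S) - v x t|
        ≤ |v (x+S) (t-S) - Ψ S| + |Ψ S - v x t| := abs_sub_le _ _ _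
      _ ≤ |v (x+S) (t-S) - Ψ S| + (|Ψ S - Ψ 0| + |Ψ 0 - v x t|) := by
          linarith [abs_sub_le (Ψ S) (Ψ 0) (v x t)]
      _ ≤ Mk * Mw * ε + (η1 * S + Mk * Mw * ε) := by
          refine add_le_add hc1 (add_le_add hMVT' ?_)
          rw [abs_sub_comm]
          exact hc2
      _ ≤ η/4 + (η/2 + η/4) := by linarith
      _ = η := by ring
  -- boundary
  have hv1 : ∀ τ : ℝ, 0 ≤ τ → v 1 τ = 0 := by
    intro τ hτ
    simp only [hvdef]
    rw [hbc1 τ hτ]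
    ring
  -- vanishing of v
  have hvanish : ∀ x t : ℝ, 0 < x → x < 1 → 1 ≤ t → v x t = 0 := by
    intro x t hx hx1 ht
    have hcv : Continuous fun S : ℝ => v (x + S) (t - S) :=
      hv.comp ((continuous_const.add continuous_id).prodMk (continuous_const.sub continuous_id))
    have h1x : 0 < 1 - x := by linarith
    have hlim1 : Tendsto (fun S => v (x + S) (t - S)) (nhdsWithin (1-x) (Iio (1-x)))
        (nhds (v 1 (t - (1-x)))) := by
      have := hcv.tendsto (1-x)
      rw [show x + (1 - x) = 1 by ring] at this
      exact this.mono_left nhdsWithin_le_nhds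
    have hlim2 : Tendsto (fun S => v (x + S) (t - S)) (nhdsWithin (1-x) (Iio (1-x)))
        (nhds (v x t)) := by
      apply Tendsto.congr' _ tendsto_const_nhds
      filter_upwards [Ioo_mem_nhdsLT_of_mem (show (1:ℝ)-x ∈ Ioc 0 (1-x) from ⟨h1x, le_refl _⟩)]
        with S hS
      exact (charConst x t S hx (le_of_lt hS.1) (by linarith [hS.2]) (by nlinarith [hS.2])).symm
    have := tendsto_nhds_unique hlim2 hlim1
    rw [this]
    exact hv1 _ (by linarith)
  -- Gronwall
  intro x t hx0 hx1 ht1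
  have ht0 : (0:ℝ) ≤ t := by linarith
  have hVol : ∀ z : ℝ, 0 < z → z ≤ 1 → wc z t = ∫ y in (0:ℝ)..z, kc z y * wc y t := by
    intro z h0 h1
    rcases eq_or_lt_of_le h1 with h | h
    · subst h; exact hbc1 t ht0
    · have := hvanish z t h0 h ht1
      simp only [hvdef] at this
      linarith [this]
  obtain ⟨Mk0, hMk0⟩ := (isCompact_Icc.prod isCompact_Icc).exists_bound_of_continuousOn
    (hkc.continuousOn (s := Icc (0:ℝ) 1 ×ˢ Icc (0:ℝ) 1))
  set Mk := max Mk0 0 with hMkdef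
  have hMk : ∀ a b : ℝ, 0 ≤ a → a ≤ 1 → 0 ≤ b → b ≤ 1 → |kc a b| ≤ Mk := by
    intro a b h1 h2 h3 h4
    exact le_trans (hMk0 (a,b) ⟨⟨h1,h2⟩,⟨h3,h4⟩⟩) (le_max_left _ _)
  have hMknn : 0 ≤ Mk := le_max_right _ _
  obtain ⟨Mw0, hMw0⟩ := (isCompact_Icc.prod isCompact_Icc).exists_bound_of_continuousOn
    (hwc.continuousOn (s := Icc (0:ℝ) 1 ×ˢ Icc (0:ℝ) t))
  set Mw := max Mw0 0 with hMwdef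
  have hMw : ∀ a b : ℝ, 0 ≤ a → a ≤ 1 → 0 ≤ b → b ≤ t → |wc a b| ≤ Mw := by
    intro a b h1 h2 h3 h4
    exact le_trans (hMw0 (a,b) ⟨⟨h1,h2⟩,⟨h3,h4⟩⟩) (le_max_left _ _)
  have hMwnn : 0 ≤ Mw := le_max_right _ _
  -- wc 0 t = 0
  have hwcb : ∀ z : ℝ, 0 < z → z ≤ 1 → |wc z t| ≤ Mk * Mw * z := by
    intro z h0 h1
    rw [hVol z h0 h1]
    have := intervalIntegral.norm_integral_le_of_norm_le_const
      (C := Mk * Mw) (f := fun y => kc z y * wc y t) (a := 0) (b := z) ?_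
    · rw [Real.norm_eq_abs] at this
      calc |∫ y in (0:ℝ)..z, kc z y * wc y t| ≤ Mk * Mw * |z - 0| := this
        _ = Mk * Mw * z := by rw [sub_zero, abs_of_pos h0]
    · intro y hy
      rw [Set.uIoc_of_le (le_of_lt h0)] at hy
      rw [Real.norm_eq_abs, abs_mul]
      have h5 : 0 ≤ y := le_of_lt hy.1
      have h6 : y ≤ 1 := le_trans hy.2 h1
      exact mul_le_mul (hMk z y (le_of_lt h0) h1 h5 h6) (hMw y t h5 h6 ht0 (le_refl t))
        (abs_nonneg _) hMknn
  have hw0 : wc 0 t = 0 := by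
    have htd : Tendsto (fun z => |wc z t|) (nhdsWithin 0 (Ioi 0)) (nhds (|wc 0 t|)) := by
      have : Continuous fun z => |wc z t| :=
        (hwcc (fun _ => t) id continuous_const continuous_id).abs
      exact (this.tendsto 0).mono_left nhdsWithin_le_nhds
    have htd2 : Tendsto (fun z : ℝ => Mk * Mw * z) (nhdsWithin 0 (Ioi 0)) (nhds 0) := by
      have : Tendsto (fun z : ℝ => Mk * Mw * z) (nhds 0) (nhds (Mk * Mw * 0)) :=
        (continuous_const.mul continuous_id).tendsto 0
      rw [mul_zero] at this
      exact this.mono_left nhdsWithin_le_nhds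
    have hb : ∀ᶠ z in nhdsWithin (0:ℝ) (Ioi 0), |wc z t| ≤ Mk * Mw * z := by
      filter_upwards [Ioc_mem_nhdsGT_of_mem (show (0:ℝ) ∈ Ico 0 1 from ⟨le_refl _, one_pos⟩)]
        with z hz
      exact hwcb z hz.1 hz.2
    have := le_of_tendsto_of_tendsto htd htd2 hb
    have h0 := abs_nonneg (wc 0 t)
    have : |wc 0 t| = 0 := le_antisymm this h0
    exact abs_eq_zero.mp this
  -- Gronwall
  set φ : ℝ → ℝ := fun z => ∫ y in (0:ℝ)..z, |wc y t| with hφdef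
  have hwct : Continuous fun y => |wc y t| :=
    (hwcc (fun _ => t) id continuous_const continuous_id).abs
  have hφd : ∀ z : ℝ, HasDerivAt φ (|wc z t|) z := by
    intro z
    apply intervalIntegral.integral_hasDerivAt_right (hwct.intervalIntegrable _ _)
      ((hwct.continuousOn.stronglyMeasurableAtFilter isOpen_univ) z (mem_univ z))
      hwct.continuousAt
  have hφcont : Continuous φ := by
    apply intervalIntegral.continuous_primitive
    intro a b; exact hwct.intervalIntegrable a b
  have hφnonneg : ∀ z : ℝ, 0 ≤ z → 0 ≤ φ z := by
    intro z hz
    apply intervalIntegral.integral_nonneg hz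
    intro y _; exact abs_nonneg _
  have hbd : ∀ z ∈ Ico (0:ℝ) 1, ‖|wc z t|‖ ≤ Mk * ‖φ z‖ + 0 := by
    intro z hz
    rw [add_zero, Real.norm_eq_abs, abs_abs, Real.norm_eq_abs,
      abs_of_nonneg (hφnonneg z hz.1)]
    rcases eq_or_lt_of_le hz.1 with h | h
    · rw [← h, hw0, abs_zero]
      exact mul_nonneg hMknn (hφnonneg 0 (le_refl 0))
    · rw [hVol z h (le_of_lt hz.2)]
      calc |∫ y in (0:ℝ)..z, kc z y * wc y t| ≤ ∫ y in (0:ℝ)..z, |kc z y * wc y t| := by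
            apply intervalIntegral.abs_integral_le_integral_abs (le_of_lt h)
        _ ≤ ∫ y in (0:ℝ)..z, Mk * |wc y t| := by
            apply intervalIntegral.integral_mono_on (le_of_lt h)
            · exact ((((hkcc (fun _ => z) id continuous_const continuous_id).mul
                (hwcc (fun _ => t) id continuous_const continuous_id))).abs).intervalIntegrable _ _
            · exact (continuous_const.mul hwct).intervalIntegrable _ _
            · intro y hy
              rw [abs_mul]
              apply mul_le_mul_of_nonneg_right _ (abs_nonneg _)
              exact hMk z y (le_of_lt h) (le_of_lt hz.2) hy.1 (le_trans hy.2 (le_of_lt hz.2))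
        _ = Mk * φ z := by rw [← intervalIntegral.integral_const_mul]
  have hgr := norm_le_gronwallBound_of_norm_deriv_right_le (f := φ)
    (f' := fun z => |wc z t|) (δ := 0) (K := Mk) (ε := 0) (a := 0) (b := 1)
    hφcont.continuousOn (fun z _ => (hφd z).hasDerivWithinAt)
    (by simp [hφdef]) hbd
  have hφ0 : ∀ z ∈ Icc (0:ℝ) 1, φ z = 0 := by
    intro z hz
    have := hgr z hz
    rw [gronwallBound_ε0] at this
    simp only [zero_mul] at this
    rw [Real.norm_eq_abs] at this
    have := le_antisymm this (abs_nonneg _)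
    exact abs_eq_zero.mp this
  rcases eq_or_lt_of_le hx0 with h | h
  · rw [← h]; exact hw0
  · have hb : |wc x t| ≤ Mk * φ x := by
      rw [hVol x h hx1]
      calc |∫ y in (0:ℝ)..x, kc x y * wc y t| ≤ ∫ y in (0:ℝ)..x, |kc x y * wc y t| := by
            apply intervalIntegral.abs_integral_le_integral_abs (le_of_lt h)
        _ ≤ ∫ y in (0:ℝ)..x, Mk * |wc y t| := by
            apply intervalIntegral.integral_mono_on (le_of_lt h)
            · exact ((((hkcc (fun _ => x) id continuous_const continuous_id).mul
                (hwcc (fun _ => t) id continuous_const continuous_id))).abs).intervalIntegrable _ _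
            · exact (continuous_const.mul hwct).intervalIntegrable _ _
            · intro y hy
              rw [abs_mul]
              apply mul_le_mul_of_nonneg_right _ (abs_nonneg _)
              exact hMk x y (le_of_lt h) hx1 hy.1 (le_trans hy.2 hx1)
        _ = Mk * φ x := by rw [← intervalIntegral.integral_const_mul]
    rw [hφ0 x ⟨hx0, hx1⟩, mul_zero] at hb
    exact abs_eq_zero.mp (le_antisymm hb (abs_nonneg _))

set_option maxHeartbeats 1000000 in
/-- (Per-characteristic version of the main stabilization theorem,
in original variables.) With `Λ(σ̄) = ∫₀^σ̄ T λ̂(Tξ) dξ`, `G(σ̄) = T ĝ(Tσ̄) e^{Λ(σ̄)}`,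
`F(σ̄,ȳ) = T² f̂(Tσ̄,Tȳ) e^{Λ(σ̄)-Λ(ȳ)}`, a `C¹` kernel `k` solving the kernel
equations on the triangle `𝒯`, and the gain `K(σ) = (1/T) k(1, σ/T) e^{Λ(σ/T)-Λ(1)}`,
every solution `u` of the one-dimensional plant on `[0,T]` with boundary feedback
`u(T,t) = ∫₀^T K(σ) u(σ,t) dσ` vanishes identically for `t ≥ T`. -/
theorem per_characteristic_stabilization
    (T : ℝ) (hT : 0 < T)
    (lamHat gHat : ℝ → ℝ) (fHat : ℝ → ℝ → ℝ)
    (hlam : ContinuousOn lamHat (Set.Icc 0 T))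
    (hg : ContinuousOn gHat (Set.Icc 0 T))
    (hf : ContinuousOn (fun p : ℝ × ℝ => fHat p.1 p.2)
      {p : ℝ × ℝ | 0 ≤ p.2 ∧ p.2 ≤ p.1 ∧ p.1 ≤ T})
    (Λ : ℝ → ℝ) (hΛ : ∀ σbar, Λ σbar = ∫ ξ in (0:ℝ)..σbar, T * lamHat (T * ξ))
    (G : ℝ → ℝ) (hGdef : ∀ σbar, G σbar = T * gHat (T * σbar) * Real.exp (Λ σbar))
    (F : ℝ → ℝ → ℝ)
    (hFdef : ∀ σbar ybar, F σbar ybar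
      = T ^ 2 * fHat (T * σbar) (T * ybar) * Real.exp (Λ σbar - Λ ybar))
    (k : ℝ → ℝ → ℝ)
    (hk_C1 : ContDiffOn ℝ 1 (fun p : ℝ × ℝ => k p.1 p.2)
      {p : ℝ × ℝ | 0 ≤ p.2 ∧ p.2 ≤ p.1 ∧ p.1 ≤ 1})
    (hk_pde : ∀ σbar ybar : ℝ, 0 ≤ ybar → ybar ≤ σbar → σbar ≤ 1 →
      deriv (fun s => k s ybar) σbar + deriv (fun y => k σbar y) ybar
        = (∫ ξ in ybar..σbar, k σbar ξ * F ξ ybar) - F σbar ybar)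
    (hk_bc : ∀ σbar ∈ Set.Icc (0:ℝ) 1,
      k σbar 0 = (∫ ybar in (0:ℝ)..σbar, k σbar ybar * G ybar) - G σbar)
    (Kgain : ℝ → ℝ)
    (hKdef : ∀ σ, Kgain σ = (1 / T) * k 1 (σ / T) * Real.exp (Λ (σ / T) - Λ 1))
    (u : ℝ → ℝ → ℝ)
    (hu_cont : ContinuousOn (fun p : ℝ × ℝ => u p.1 p.2) (Set.Icc 0 T ×ˢ Set.Ici 0))
    (hu_C1 : ContDiffOn ℝ 1 (fun p : ℝ × ℝ => u p.1 p.2) (Set.Ioo 0 T ×ˢ Set.Ioi 0))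
    (hu_pde : ∀ σ ∈ Set.Ioo (0:ℝ) T, ∀ t ∈ Set.Ioi (0:ℝ),
      deriv (fun τ => u σ τ) t
        = deriv (fun s => u s t) σ
          + lamHat σ * u σ t
          + gHat σ * u 0 t
          + ∫ σ' in (0:ℝ)..σ, fHat σ σ' * u σ' t)
    (hu_bc : ∀ t ≥ (0:ℝ), u T t = ∫ σ in (0:ℝ)..T, Kgain σ * u σ t) :
    ∀ σ ∈ Set.Icc (0:ℝ) T, ∀ t ≥ T, u σ t = 0 := by
  have hT' : T ≠ 0 := ne_of_gt hT
  -- clamping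
  set c01 : ℝ → ℝ := fun x => max 0 (min x 1) with hc01def
  have hc01c : Continuous c01 := continuous_const.max (continuous_id.min continuous_const)
  have hc01 : ∀ x : ℝ, 0 ≤ x → x ≤ 1 → c01 x = x := by
    intro x h0 h1
    simp only [hc01def]
    rw [min_eq_left h1, max_eq_right h0]
  have hc01mem : ∀ x : ℝ, 0 ≤ c01 x ∧ c01 x ≤ 1 := by
    intro x
    constructor
    · exact le_max_left _ _
    · simp only [hc01def]
      exact max_le zero_le_one (min_le_right _ _)
  have hTc01 : ∀ x : ℝ, T * c01 x ≤ T := by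
    intro x
    calc T * c01 x ≤ T * 1 := mul_le_mul_of_nonneg_left (hc01mem x).2 (le_of_lt hT)
      _ = T := mul_one T
  -- rescaled coefficient
  set lamc : ℝ → ℝ := fun ξ => T * lamHat (T * c01 ξ) with hlamcdef
  have hlamc : Continuous lamc := by
    apply continuous_const.mul
    apply hlam.comp_continuous (continuous_const.mul hc01c)
    intro x
    exact ⟨mul_nonneg (le_of_lt hT) (hc01mem x).1,
      hTc01 x⟩
  set Λt : ℝ → ℝ := fun x => ∫ ξ in (0:ℝ)..x, lamc ξ with hΛtdef
  have hΛtc : Continuous Λt :=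
    intervalIntegral.continuous_primitive (fun a b => hlamc.intervalIntegrable a b) 0
  have hΛteq : ∀ x : ℝ, 0 ≤ x → x ≤ 1 → Λt x = Λ x := by
    intro x h0 h1
    rw [hΛ x]
    apply intervalIntegral.integral_congr
    intro ξ hξ
    rw [Set.uIcc_of_le h0] at hξ
    simp only [hlamcdef]
    rw [hc01 ξ hξ.1 (le_trans hξ.2 h1)]
  have hΛt0 : Λt 0 = 0 := by simp [hΛtdef]
  have hΛtd : ∀ x : ℝ, HasDerivAt Λt (lamc x) x := by
    intro x
    exact intervalIntegral.integral_hasDerivAt_right (hlamc.intervalIntegrable 0 x)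
      ((hlamc.continuousOn.stronglyMeasurableAtFilter isOpen_univ) x (mem_univ x))
      hlamc.continuousAt
  -- clamped kernel and data
  set yc : ℝ → ℝ → ℝ := fun x y => max 0 (min y (c01 x)) with hycdef
  have hycc : Continuous fun p : ℝ × ℝ => yc p.1 p.2 :=
    continuous_const.max (continuous_snd.min (hc01c.comp continuous_fst))
  have hyc1 : ∀ x y : ℝ, 0 ≤ yc x y := fun x y => le_max_left _ _
  have hyc2 : ∀ x y : ℝ, yc x y ≤ c01 x := fun x y =>
    max_le (hc01mem x).1 (min_le_right _ _)
  have hyceq : ∀ x y : ℝ, 0 ≤ y → y ≤ x → x ≤ 1 → yc x y = y := by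
    intro x y h0 h1 h2
    simp only [hycdef]
    rw [hc01 x (le_trans h0 h1) h2, min_eq_left h1, max_eq_right h0]
  set kc : ℝ → ℝ → ℝ := fun x y => k (c01 x) (yc x y) with hkcdef
  have hkcc : Continuous fun p : ℝ × ℝ => kc p.1 p.2 := by
    apply (hk_C1.continuousOn).comp_continuous
      ((hc01c.comp continuous_fst).prodMk hycc)
    intro p
    exact ⟨hyc1 _ _, hyc2 _ _, (hc01mem _).2⟩
  have hkceq : ∀ x y : ℝ, 0 ≤ y → y ≤ x → x ≤ 1 → kc x y = k x y := by
    intro x y h0 h1 h2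
    simp only [hkcdef]
    rw [hc01 x (le_trans h0 h1) h2, hyceq x y h0 h1 h2]
  set wc : ℝ → ℝ → ℝ := fun x τ => Real.exp (Λt x) * u (T * c01 x) (T * max 0 τ) with hwcdef
  have hwcc : Continuous fun p : ℝ × ℝ => wc p.1 p.2 := by
    apply Continuous.mul
    · exact Real.continuous_exp.comp (hΛtc.comp continuous_fst)
    · have hcomp : Continuous ((fun p : ℝ × ℝ => u p.1 p.2)
          ∘ (fun p : ℝ × ℝ => (T * c01 p.1, T * max 0 p.2))) := by
        apply hu_cont.comp_continuous
        · exact (continuous_const.mul (hc01c.comp continuous_fst)).prodMk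
            (continuous_const.mul (continuous_const.max continuous_snd))
        · intro p
          constructor
          · exact ⟨mul_nonneg (le_of_lt hT) (hc01mem _).1,
              hTc01 p.1⟩
          · exact mul_nonneg (le_of_lt hT) (le_max_left _ _)
      exact hcomp
  have hwceq : ∀ x τ : ℝ, 0 ≤ x → x ≤ 1 → 0 ≤ τ →
      wc x τ = Real.exp (Λ x) * u (T * x) (T * τ) := by
    intro x τ h0 h1 h2
    simp only [hwcdef]
    rw [hc01 x h0 h1, hΛteq x h0 h1, max_eq_right h2]
  set Gcc : ℝ → ℝ := fun y => T * gHat (T * c01 y) * Real.exp (Λt (c01 y)) with hGccdef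
  have hGcc : Continuous Gcc := by
    apply Continuous.mul
    · apply continuous_const.mul
      apply hg.comp_continuous (continuous_const.mul hc01c)
      intro x
      exact ⟨mul_nonneg (le_of_lt hT) (hc01mem x).1,
        hTc01 x⟩
    · exact Real.continuous_exp.comp (hΛtc.comp hc01c)
  have hGceq : ∀ y : ℝ, 0 ≤ y → y ≤ 1 → Gcc y = G y := by
    intro y h0 h1
    simp only [hGccdef]
    rw [hc01 y h0 h1, hΛteq y h0 h1, hGdef]
  set Fcc : ℝ → ℝ → ℝ := fun x y =>
    T ^ 2 * fHat (T * c01 x) (T * yc x y) * Real.exp (Λt (c01 x) - Λt (yc x y)) with hFccdef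
  have hFcc : Continuous fun p : ℝ × ℝ => Fcc p.1 p.2 := by
    apply Continuous.mul
    · apply continuous_const.mul
      have hcomp : Continuous ((fun p : ℝ × ℝ => fHat p.1 p.2)
          ∘ (fun p : ℝ × ℝ => (T * c01 p.1, T * yc p.1 p.2))) := by
        apply hf.comp_continuous
        · exact (continuous_const.mul (hc01c.comp continuous_fst)).prodMk
            (continuous_const.mul hycc)
        · intro p
          refine ⟨mul_nonneg (le_of_lt hT) (hyc1 _ _), ?_, ?_⟩
          · exact mul_le_mul_of_nonneg_left (hyc2 _ _) (le_of_lt hT)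
          · exact hTc01 p.1
      exact hcomp
    · exact Real.continuous_exp.comp
        ((hΛtc.comp (hc01c.comp continuous_fst)).sub (hΛtc.comp hycc))
  have hFceq : ∀ x y : ℝ, 0 ≤ y → y ≤ x → x ≤ 1 → Fcc x y = F x y := by
    intro x y h0 h1 h2
    have hx0 : (0:ℝ) ≤ x := le_trans h0 h1
    simp only [hFccdef]
    rw [hc01 x hx0 h2, hyceq x y h0 h1 h2, hΛteq x hx0 h2,
      hΛteq y h0 (le_trans h1 h2), hFdef]
  -- transformed PDE for wc
  have hw_pde' : ∀ x t : ℝ, 0 < x → x < 1 → 0 < t →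
      HasDerivAt (fun s => wc (x + s) (t - s))
        (-(Gcc x * wc 0 t + ∫ y in (0:ℝ)..x, Fcc x y * wc y t)) 0 := by
    intro x t hx0 hx1 ht0
    set σ0 := T * x with hσ0def
    set t0 := T * t with ht0def
    have hσ0mem : σ0 ∈ Set.Ioo 0 T := ⟨by positivity, by nlinarith⟩
    have ht0mem : t0 ∈ Set.Ioi (0:ℝ) := mul_pos hT ht0
    have hopen : IsOpen (Set.Ioo (0:ℝ) T ×ˢ Set.Ioi (0:ℝ)) := isOpen_Ioo.prod isOpen_Ioi
    have hdiffu : DifferentiableAt ℝ (fun p : ℝ × ℝ => u p.1 p.2) (σ0, t0) :=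
      (hu_C1.contDiffAt (hopen.mem_nhds ⟨hσ0mem, ht0mem⟩)).differentiableAt one_ne_zero
    set Du := fderiv ℝ (fun p : ℝ × ℝ => u p.1 p.2) (σ0, t0) with hDudef
    have hu1 : HasDerivAt (fun σ => u σ t0) (Du (1, 0)) σ0 := by
      have hpath : HasDerivAt (fun σ : ℝ => ((σ, t0) : ℝ × ℝ)) (((1:ℝ), (0:ℝ))) σ0 :=
        (hasDerivAt_id σ0).prodMk (hasDerivAt_const σ0 t0)
      exact hdiffu.hasFDerivAt.comp_hasDerivAt σ0 hpath
    have hu2 : HasDerivAt (fun τ => u σ0 τ) (Du (0, 1)) t0 := by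
      have hpath : HasDerivAt (fun τ : ℝ => ((σ0, τ) : ℝ × ℝ)) (((0:ℝ), (1:ℝ))) t0 :=
        (hasDerivAt_const t0 σ0).prodMk (hasDerivAt_id t0)
      exact hdiffu.hasFDerivAt.comp_hasDerivAt t0 hpath
    have hpde := hu_pde σ0 hσ0mem t0 ht0mem
    rw [hu1.deriv, hu2.deriv] at hpde
    have hp1 : HasDerivAt (fun s : ℝ => T * (x + s)) (T * 1) 0 :=
      ((hasDerivAt_id (0:ℝ)).const_add x).const_mul T
    have hp2 : HasDerivAt (fun s : ℝ => T * (t - s)) (T * (-1)) 0 :=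
      ((hasDerivAt_id (0:ℝ)).const_sub t).const_mul T
    have hpath : HasDerivAt (fun s : ℝ => ((T * (x + s), T * (t - s)) : ℝ × ℝ))
        ((T * 1, T * (-1))) 0 := hp1.prodMk hp2
    have hFD : HasFDerivAt (fun p : ℝ × ℝ => u p.1 p.2) Du
        ((fun s : ℝ => ((T * (x + s), T * (t - s)) : ℝ × ℝ)) 0) := by
      have heq : ((fun s : ℝ => ((T * (x + s), T * (t - s)) : ℝ × ℝ)) 0) = (σ0, t0) := by
        simp [hσ0def, ht0def]
      rw [heq]
      exact hdiffu.hasFDerivAt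
    have hupath : HasDerivAt (fun s => u (T * (x + s)) (T * (t - s)))
        (Du (T * 1, T * (-1))) 0 := by have h := hFD.comp_hasDerivAt 0 hpath; exact h
    have hDu_lin : Du (T * 1, T * (-1)) = T * Du (1, 0) - T * Du (0, 1) := by
      have h1 : ((T * 1, T * (-1)) : ℝ × ℝ)
          = T • (((1:ℝ), (0:ℝ)) : ℝ × ℝ) - T • (((0:ℝ), (1:ℝ)) : ℝ × ℝ) := by
        simp [Prod.ext_iff]
      rw [h1, map_sub, ContinuousLinearMap.map_smul, ContinuousLinearMap.map_smul, smul_eq_mul, smul_eq_mul]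
    have hΛshift : HasDerivAt (fun s => Λt (x + s)) (lamc x) 0 := by
      have h0 : HasDerivAt Λt (lamc x) (x + 0) := by simpa using hΛtd x
      exact HasDerivAt.comp_const_add x 0 h0
    have hexp : HasDerivAt (fun s => Real.exp (Λt (x + s))) (Real.exp (Λt x) * lamc x) 0 := by
      have := hΛshift.exp
      simpa using this
    have hg0 : HasDerivAt (fun s => Real.exp (Λt (x + s)) * u (T * (x + s)) (T * (t - s)))
        (Real.exp (Λt x) * lamc x * u σ0 t0 + Real.exp (Λt x) * Du (T * 1, T * (-1))) 0 := by
      have := hexp.mul hupath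
      simp [hσ0def, ht0def] at this ⊢
      exact this
    have hev : (fun s => wc (x + s) (t - s)) =ᶠ[nhds (0:ℝ)]
        (fun s => Real.exp (Λt (x + s)) * u (T * (x + s)) (T * (t - s))) := by
      have hr : 0 < min x (min (1 - x) t) := lt_min hx0 (lt_min (by linarith) ht0)
      filter_upwards [Metric.ball_mem_nhds (0:ℝ) hr] with s hs
      rw [Metric.mem_ball, Real.dist_eq, sub_zero] at hs
      have hs1 : |s| < x := lt_of_lt_of_le hs (min_le_left _ _)
      have hs2 : |s| < 1 - x := lt_of_lt_of_le hs (le_trans (min_le_right _ _) (min_le_left _ _))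
      have hs3 : |s| < t := lt_of_lt_of_le hs (le_trans (min_le_right _ _) (min_le_right _ _))
      have ha1 : 0 ≤ x + s := by
        have := neg_abs_le s
        linarith
      have ha2 : x + s ≤ 1 := by
        have := le_abs_self s
        linarith
      have ha3 : 0 ≤ t - s := by
        have := le_abs_self s
        linarith
      simp only [hwcdef]
      rw [hc01 (x + s) ha1 ha2, max_eq_right ha3]
    have hD := hg0.congr_of_eventuallyEq hev
    have hGweval : Gcc x * wc 0 t = T * gHat σ0 * Real.exp (Λt x) * u 0 t0 := by
      simp only [hGccdef, hwcdef]
      rw [hc01 x (le_of_lt hx0) (le_of_lt hx1), hc01 0 le_rfl zero_le_one, hΛt0,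
        max_eq_right (le_of_lt ht0)]
      simp [Real.exp_zero]
      try ring
    have hIeval : (∫ y in (0:ℝ)..x, Fcc x y * wc y t)
        = Real.exp (Λt x) * T * ∫ σ' in (0:ℝ)..σ0, fHat σ0 σ' * u σ' t0 := by
      have hpt : ∀ y ∈ Set.uIcc (0:ℝ) x, Fcc x y * wc y t
          = Real.exp (Λt x) * T ^ 2 * (fHat σ0 (T * y) * u (T * y) t0) := by
        intro y hy
        rw [Set.uIcc_of_le (le_of_lt hx0)] at hy
        simp only [hFccdef, hwcdef]
        rw [hc01 x (le_of_lt hx0) (le_of_lt hx1), hyceq x y hy.1 hy.2 (le_of_lt hx1),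
          hc01 y hy.1 (le_trans hy.2 (le_of_lt hx1)), max_eq_right (le_of_lt ht0),
          Real.exp_sub]
        field_simp [Real.exp_ne_zero]
        ring
      rw [intervalIntegral.integral_congr hpt, intervalIntegral.integral_const_mul]
      have hsub := intervalIntegral.integral_comp_mul_left
        (f := fun σ' => fHat σ0 σ' * u σ' t0) (c := T) (a := 0) (b := x) hT'
      rw [mul_zero] at hsub
      rw [hsub, smul_eq_mul]
      rw [show (T:ℝ)^2 = T * T by ring]
      field_simp
      ring
    have hVeq : -(Gcc x * wc 0 t + ∫ y in (0:ℝ)..x, Fcc x y * wc y t)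
        = Real.exp (Λt x) * lamc x * u σ0 t0 + Real.exp (Λt x) * Du (T * 1, T * (-1)) := by
      rw [hGweval, hIeval, hDu_lin, hpde]
      have hlamx : lamc x = T * lamHat σ0 := by
        simp only [hlamcdef]
        rw [hc01 x (le_of_lt hx0) (le_of_lt hx1)]
      rw [hlamx]
      ring
    rw [hVeq]
    exact hD
  -- transformed kernel PDE
  have hkc_pde' : ∀ x y : ℝ, 0 < y → y < x → x < 1 →
      HasDerivAt (fun s => kc (x + s) (y + s))
        ((∫ ξ in y..x, kc x ξ * Fcc ξ y) - Fcc x y) 0 := by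
    intro x y hy0 hyx hx1
    have hopenT : IsOpen {p : ℝ × ℝ | 0 < p.2 ∧ p.2 < p.1 ∧ p.1 < 1} := by
      have hset : {p : ℝ × ℝ | 0 < p.2 ∧ p.2 < p.1 ∧ p.1 < 1}
          = {p : ℝ × ℝ | 0 < p.2} ∩ ({p : ℝ × ℝ | p.2 < p.1} ∩ {p : ℝ × ℝ | p.1 < 1}) := by
        ext p
        simp [Set.mem_inter_iff, Set.mem_setOf_eq, and_assoc]
      rw [hset]
      exact (isOpen_lt continuous_const continuous_snd).inter
        ((isOpen_lt continuous_snd continuous_fst).inter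
          (isOpen_lt continuous_fst continuous_const))
    have hmemT : {p : ℝ × ℝ | 0 ≤ p.2 ∧ p.2 ≤ p.1 ∧ p.1 ≤ 1} ∈ nhds ((x, y) : ℝ × ℝ) :=
      Filter.mem_of_superset (hopenT.mem_nhds ⟨hy0, hyx, hx1⟩)
        (fun p hp => ⟨le_of_lt hp.1, le_of_lt hp.2.1, le_of_lt hp.2.2⟩)
    have hdiffk : DifferentiableAt ℝ (fun p : ℝ × ℝ => k p.1 p.2) (x, y) :=
      (hk_C1.contDiffAt hmemT).differentiableAt one_ne_zero
    set Dk := fderiv ℝ (fun p : ℝ × ℝ => k p.1 p.2) (x, y) with hDkdef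
    have hk1 : HasDerivAt (fun s => k s y) (Dk (1, 0)) x := by
      have hpath : HasDerivAt (fun s : ℝ => ((s, y) : ℝ × ℝ)) (((1:ℝ), (0:ℝ))) x :=
        (hasDerivAt_id x).prodMk (hasDerivAt_const x y)
      exact hdiffk.hasFDerivAt.comp_hasDerivAt x hpath
    have hk2 : HasDerivAt (fun z => k x z) (Dk (0, 1)) y := by
      have hpath : HasDerivAt (fun z : ℝ => ((x, z) : ℝ × ℝ)) (((0:ℝ), (1:ℝ))) y :=
        (hasDerivAt_const y x).prodMk (hasDerivAt_id y)
      exact hdiffk.hasFDerivAt.comp_hasDerivAt y hpath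
    have hkpde := hk_pde x y (le_of_lt hy0) (le_of_lt hyx) (le_of_lt hx1)
    rw [hk1.deriv, hk2.deriv] at hkpde
    have hpathd : HasDerivAt (fun s : ℝ => ((x + s, y + s) : ℝ × ℝ)) (((1:ℝ), (1:ℝ))) 0 :=
      (((hasDerivAt_id (0:ℝ)).const_add x)).prodMk (((hasDerivAt_id (0:ℝ)).const_add y))
    have hFDk : HasFDerivAt (fun p : ℝ × ℝ => k p.1 p.2) Dk
        ((fun s : ℝ => ((x + s, y + s) : ℝ × ℝ)) 0) := by
      have heq : ((fun s : ℝ => ((x + s, y + s) : ℝ × ℝ)) 0) = (x, y) := by simp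
      rw [heq]
      exact hdiffk.hasFDerivAt
    have hdiag : HasDerivAt (fun s => k (x + s) (y + s)) (Dk (1, 1)) 0 :=
      by have h := hFDk.comp_hasDerivAt 0 hpathd; exact h
    have hlin : Dk (1, 1) = Dk (1, 0) + Dk (0, 1) := by
      have h1 : (((1:ℝ), (1:ℝ)) : ℝ × ℝ) = ((1:ℝ), (0:ℝ)) + ((0:ℝ), (1:ℝ)) := by
        simp [Prod.ext_iff]
      rw [h1, map_add]
    have hev : (fun s => kc (x + s) (y + s)) =ᶠ[nhds (0:ℝ)]
        (fun s => k (x + s) (y + s)) := by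
      have hr : 0 < min y (1 - x) := lt_min hy0 (by linarith)
      filter_upwards [Metric.ball_mem_nhds (0:ℝ) hr] with s hs
      rw [Metric.mem_ball, Real.dist_eq, sub_zero] at hs
      have hs1 : |s| < y := lt_of_lt_of_le hs (min_le_left _ _)
      have hs2 : |s| < 1 - x := lt_of_lt_of_le hs (min_le_right _ _)
      have ha1 : 0 ≤ y + s := by
        have := neg_abs_le s
        linarith
      have ha2 : y + s ≤ x + s := by linarith [le_of_lt hyx]
      have ha3 : x + s ≤ 1 := by
        have := le_abs_self s
        linarith
      exact hkceq (x + s) (y + s) ha1 ha2 ha3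
    have hD := hdiag.congr_of_eventuallyEq hev
    have hVeq : (∫ ξ in y..x, kc x ξ * Fcc ξ y) - Fcc x y = Dk (1, 1) := by
      have hint : (∫ ξ in y..x, kc x ξ * Fcc ξ y) = ∫ ξ in y..x, k x ξ * F ξ y := by
        apply intervalIntegral.integral_congr
        intro ξ hξ
        dsimp only
        rw [Set.uIcc_of_le (le_of_lt hyx)] at hξ
        have hξ0 : 0 ≤ ξ := le_trans (le_of_lt hy0) hξ.1
        have hξ1 : ξ ≤ 1 := le_trans hξ.2 (le_of_lt hx1)
        rw [hkceq x ξ hξ0 hξ.2 (le_of_lt hx1),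
          hFceq ξ y (le_of_lt hy0) hξ.1 hξ1]
      rw [hint, hFceq x y (le_of_lt hy0) (le_of_lt hyx) (le_of_lt hx1), hlin, ← hkpde]
    rw [hVeq]
    exact hD
  -- transformed boundary condition for the kernel
  have hkc_bc' : ∀ x : ℝ, 0 ≤ x → x ≤ 1 →
      kc x 0 = (∫ y in (0:ℝ)..x, kc x y * Gcc y) - Gcc x := by
    intro x h0 h1
    have hbc := hk_bc x ⟨h0, h1⟩
    rw [hkceq x 0 le_rfl h0 h1, hGceq x h0 h1, hbc]
    congr 1
    apply intervalIntegral.integral_congr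
    intro y hy
    dsimp only
    rw [Set.uIcc_of_le h0] at hy
    rw [hkceq x y hy.1 hy.2 h1, hGceq y hy.1 (le_trans hy.2 h1)]
  -- transformed feedback boundary condition
  have hbc1' : ∀ τ : ℝ, 0 ≤ τ → wc 1 τ = ∫ y in (0:ℝ)..1, kc 1 y * wc y τ := by
    intro τ hτ
    have hbc := hu_bc (T * τ) (mul_nonneg (le_of_lt hT) hτ)
    have hsub := intervalIntegral.integral_comp_mul_left
      (f := fun σ => Kgain σ * u σ (T * τ)) (c := T) (a := 0) (b := 1) hT'
    rw [mul_zero, mul_one] at hsub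
    have hpt : ∀ y ∈ Set.uIcc (0:ℝ) 1, Kgain (T * y) * u (T * y) (T * τ)
        = Real.exp (-(Λ 1)) * (T⁻¹ * (kc 1 y * wc y τ)) := by
      intro y hy
      rw [Set.uIcc_of_le zero_le_one] at hy
      rw [hKdef (T * y), mul_div_cancel_left₀ y hT',
        hkceq 1 y hy.1 hy.2 le_rfl, hwceq y τ hy.1 hy.2 hτ,
        Real.exp_sub, Real.exp_neg]
      field_simp [Real.exp_ne_zero]
    have h3 : (∫ y in (0:ℝ)..1, Kgain (T * y) * u (T * y) (T * τ))
        = Real.exp (-(Λ 1)) * (T⁻¹ * ∫ y in (0:ℝ)..1, kc 1 y * wc y τ) := by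
      rw [intervalIntegral.integral_congr hpt, intervalIntegral.integral_const_mul,
        intervalIntegral.integral_const_mul]
    rw [h3, smul_eq_mul] at hsub
    have h4 : (∫ σ in (0:ℝ)..T, Kgain σ * u σ (T * τ))
        = Real.exp (-(Λ 1)) * ∫ y in (0:ℝ)..1, kc 1 y * wc y τ := by
      have hT1 : T⁻¹ ≠ 0 := inv_ne_zero hT'
      field_simp at hsub
      linarith [hsub]
    have hwc1 : wc 1 τ = Real.exp (Λ 1) * u T (T * τ) := by
      have := hwceq 1 τ zero_le_one le_rfl hτ
      rwa [mul_one] at this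
    rw [hwc1, hbc, h4, Real.exp_neg]
    rw [← mul_assoc]
    rw [mul_inv_cancel₀ (Real.exp_ne_zero _), one_mul]
  -- apply the main stabilization lemma
  have hW := key_char kc Fcc Gcc wc hkcc hFcc hGcc hwcc hw_pde' hkc_pde' hkc_bc' hbc1'
  intro σ hσ t ht
  have hσ0 : 0 ≤ σ := hσ.1
  have hσT : σ ≤ T := hσ.2
  set x := σ / T with hxdef
  set tb := t / T with htbdef
  have hx0 : 0 ≤ x := div_nonneg hσ0 (le_of_lt hT)
  have hx1 : x ≤ 1 := (div_le_one hT).mpr hσT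
  have htb1 : 1 ≤ tb := (one_le_div hT).mpr ht
  have h0 := hW x tb hx0 hx1 htb1
  rw [hwceq x tb hx0 hx1 (by linarith)] at h0
  have he1 : T * x = σ := by
    rw [hxdef]
    field_simp
  have he2 : T * tb = t := by
    rw [htbdef]
    field_simp
  rw [he1, he2] at h0
  rcases mul_eq_zero.mp h0 with h | h
  · exact absurd h (Real.exp_ne_zero _)
  · exact h
end

section
/- (Finite-time convergence of the compatibility correction term.) Let m₁ > 0 and m₂ ∈ (0,1), and let ε : [0,∞) → ℝ be differentiable and satisfy ε'(t) = −m₁ · sign(ε(t)) · |ε(t)|^{m₂} for all t ≥ 0, where sign(0) = 0. Then ε(t) = 0 for every t ≥ |ε(0)|^{1−m₂} / (m₁ (1 − m₂)). -/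
lemma my_self_mul_sign (x : ℝ) : x * Real.sign x = |x| := by
  rcases lt_trichotomy x 0 with h | h | h
  · rw [Real.sign_of_neg h, abs_of_neg h]; ring
  · simp [h]
  · rw [Real.sign_of_pos h, abs_of_pos h]; ring

/-- (Finite-time convergence of the compatibility correction term.)
If `m₁ > 0`, `m₂ ∈ (0,1)`, and `ε` is differentiable with
`ε'(t) = -m₁ sign(ε(t)) |ε(t)|^{m₂}` for all `t ≥ 0`, then `ε(t) = 0` for every
`t ≥ |ε(0)|^{1-m₂} / (m₁ (1-m₂))`. -/
theorem correction_term_finite_time_convergence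
    (m₁ m₂ : ℝ) (hm₁ : 0 < m₁) (hm₂ : m₂ ∈ Set.Ioo (0:ℝ) 1)
    (ε : ℝ → ℝ)
    (hode : ∀ t ≥ (0:ℝ),
      HasDerivAt ε (-m₁ * Real.sign (ε t) * |ε t| ^ m₂) t) :
    ∀ t, |ε 0| ^ (1 - m₂) / (m₁ * (1 - m₂)) ≤ t → ε t = 0 := by
  obtain ⟨hm₂0, hm₂1⟩ := hm₂
  have h1m₂ : (0:ℝ) < 1 - m₂ := by linarith
  set c : ℝ := m₁ * (1 - m₂) with hc
  have hc0 : 0 < c := mul_pos hm₁ h1m₂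
  set T : ℝ := |ε 0| ^ (1 - m₂) / c with hTdef
  have hT0 : 0 ≤ T := div_nonneg (Real.rpow_nonneg (abs_nonneg _) _) hc0.le
  -- derivative of W = ε^2
  have hW : ∀ t ∈ Set.Ici (0:ℝ), HasDerivAt (fun s => ε s ^ 2)
      (2 * ε t * (-m₁ * Real.sign (ε t) * |ε t| ^ m₂)) t := by
    intro t ht
    have := (hode t ht).pow 2
    show HasDerivAt (ε ^ 2) _ t
    simpa [mul_comm, mul_assoc, mul_left_comm] using this
  -- W is antitone on [0, ∞)
  have hWanti : AntitoneOn (fun s => ε s ^ 2) (Set.Ici 0) := by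
    apply antitoneOn_of_deriv_nonpos (convex_Ici 0)
    · intro t ht
      exact ((hW t ht).continuousAt).continuousWithinAt
    · intro t ht
      rw [interior_Ici] at ht
      exact (hW t (Set.mem_Ici.mpr (le_of_lt ht))).differentiableAt.differentiableWithinAt
    · intro t ht
      rw [interior_Ici] at ht
      rw [(hW t (Set.mem_Ici.mpr ht.le)).deriv]
      have h1 : ε t * Real.sign (ε t) = |ε t| := my_self_mul_sign (ε t)
      have h2 : (0:ℝ) ≤ |ε t| ^ m₂ := Real.rpow_nonneg (abs_nonneg _) _
      calc 2 * ε t * (-m₁ * Real.sign (ε t) * |ε t| ^ m₂)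
          = -2 * m₁ * ((ε t * Real.sign (ε t)) * |ε t| ^ m₂) := by ring
        _ = -2 * m₁ * (|ε t| * |ε t| ^ m₂) := by rw [h1]
        _ ≤ 0 := by nlinarith [mul_nonneg (abs_nonneg (ε t)) h2]
  -- derivative of g = (ε^2)^((1-m₂)/2) where ε ≠ 0
  have key : ∀ t, 0 ≤ t → ε t ≠ 0 →
      HasDerivAt (fun s => (ε s ^ 2) ^ ((1 - m₂)/2)) (-c) t := by
    intro t ht hne
    have h2 := (hW t ht).rpow_const (p := (1 - m₂)/2) (Or.inl (pow_ne_zero 2 hne))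
    convert h2 using 1
    have hx : (0:ℝ) < |ε t| := abs_pos.mpr hne
    have hsq : ε t ^ 2 = |ε t| ^ 2 := (sq_abs _).symm
    have h1 : ε t * Real.sign (ε t) = |ε t| := my_self_mul_sign (ε t)
    rw [hsq]
    have hpow : (|ε t| ^ 2 : ℝ) ^ ((1 - m₂)/2 - 1) = |ε t| ^ (2 * ((1 - m₂)/2 - 1)) := by
      rw [← Real.rpow_natCast |ε t| 2, ← Real.rpow_mul hx.le]
      norm_num
    rw [hpow]
    have hcomb : |ε t| * |ε t| ^ m₂ * |ε t| ^ (2 * ((1 - m₂)/2 - 1)) = 1 := by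
      have e1 : |ε t| * |ε t| ^ m₂ = |ε t| ^ (1 + m₂) := by
        rw [Real.rpow_add hx, Real.rpow_one]
      rw [e1, ← Real.rpow_add hx,
        show 1 + m₂ + 2 * ((1 - m₂)/2 - 1) = 0 by ring, Real.rpow_zero]
    calc -c = -m₁ * (1 - m₂) * 1 := by rw [hc]; ring
      _ = -m₁ * (1 - m₂) *
          (|ε t| * |ε t| ^ m₂ * |ε t| ^ (2 * ((1 - m₂)/2 - 1))) := by rw [hcomb]
      _ = 2 * ε t * (-m₁ * Real.sign (ε t) * |ε t| ^ m₂) * ((1 - m₂)/2) *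
          |ε t| ^ (2 * ((1 - m₂)/2 - 1)) := by
            rw [show 2 * ε t * (-m₁ * Real.sign (ε t) * |ε t| ^ m₂)
              = -2 * m₁ * ((ε t * Real.sign (ε t)) * |ε t| ^ m₂) from by ring, h1]
            ring
  -- there is a zero in [0, T]
  have hzero : ∃ t₀ ∈ Set.Icc (0:ℝ) T, ε t₀ = 0 := by
    by_cases h0 : ε 0 = 0
    · exact ⟨0, ⟨le_refl 0, hT0⟩, h0⟩
    by_contra hno
    push_neg at hno
    have hTpos : 0 < T := by
      rcases hT0.lt_or_eq with h | h
      · exact h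
      · exfalso
        apply h0
        have hz : |ε 0| ^ (1 - m₂) / c = 0 := by rw [← hTdef]; exact h.symm
        rcases div_eq_zero_iff.mp hz with hA | hA
        · exact abs_eq_zero.mp ((Real.rpow_eq_zero (abs_nonneg _) h1m₂.ne').mp hA)
        · exact absurd hA hc0.ne' 
    set g : ℝ → ℝ := fun s => (ε s ^ 2) ^ ((1 - m₂)/2) with hg
    set h : ℝ → ℝ := fun s => g s + c * s with hh
    have hderiv : ∀ t ∈ Set.Icc (0:ℝ) T, HasDerivAt h 0 t := by
      intro t ht
      have := (key t ht.1 (hno t ht)).add ((hasDerivAt_id t).const_mul c)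
      show HasDerivAt (g + fun y => c * y) 0 t
      simpa [hh] using this
    have hcont : ContinuousOn h (Set.Icc 0 T) := fun t ht =>
      ((hderiv t ht).continuousAt).continuousWithinAt
    have hdiff : DifferentiableOn ℝ h (interior (Set.Icc 0 T)) := by
      intro t ht
      exact (hderiv t (interior_subset ht)).differentiableAt.differentiableWithinAt
    have hmono : MonotoneOn h (Set.Icc 0 T) := by
      apply monotoneOn_of_deriv_nonneg (convex_Icc 0 T) hcont hdiff
      intro t ht
      rw [(hderiv t (interior_subset ht)).deriv]
    have hanti : AntitoneOn h (Set.Icc 0 T) := by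
      apply antitoneOn_of_deriv_nonpos (convex_Icc 0 T) hcont hdiff
      intro t ht
      rw [(hderiv t (interior_subset ht)).deriv]
    have h0T : (0:ℝ) ∈ Set.Icc (0:ℝ) T := ⟨le_refl 0, hT0⟩
    have hTT : T ∈ Set.Icc (0:ℝ) T := ⟨hT0, le_refl T⟩
    have heq : h T = h 0 :=
      le_antisymm (hanti h0T hTT hT0) (hmono h0T hTT hT0)
    -- compute h 0 and deduce g T = 0
    have hg0 : g 0 = |ε 0| ^ (1 - m₂) := by
      rw [hg]
      simp only []
      rw [← sq_abs (ε 0), ← Real.rpow_natCast |ε 0| 2, ← Real.rpow_mul (abs_nonneg _)]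
      norm_num
      rw [show (2:ℝ) * ((1 - m₂)/2) = 1 - m₂ by ring]
    have hcT : c * T = |ε 0| ^ (1 - m₂) := by
      rw [hTdef]; field_simp
    have hgT : g T = 0 := by
      have : g T + c * T = g 0 + c * 0 := heq
      rw [hg0, hcT] at this
      linarith
    have : ε T ^ 2 = 0 := by
      have hp : ((1 - m₂)/2 : ℝ) ≠ 0 := by positivity
      exact (Real.rpow_eq_zero (sq_nonneg _) hp).mp hgT
    exact hno T hTT (sq_eq_zero_iff.mp this)
  -- conclude
  intro t ht
  obtain ⟨t₀, ⟨ht₀0, ht₀T⟩, hz⟩ := hzero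
  have ht0 : (0:ℝ) ≤ t := hT0.trans ht
  have hle : ε t ^ 2 ≤ ε t₀ ^ 2 := hWanti ht₀0 ht0 (ht₀T.trans ht)
  rw [hz] at hle
  have : ε t ^ 2 = 0 := le_antisymm (by simpa using hle) (sq_nonneg _)
  exact sq_eq_zero_iff.mp this
end

section
/- (The explicit kernel solves the kernel equations in the example.) Let γ > 0, b > 0, T > 0 and ρ₁, ρ₂ ∈ ℝ, set c = γ T e^{b(ρ₁ + ρ₂)}, and define k(σ̄, ȳ) = −c · exp( (2bT + c)(σ̄ − ȳ) ) on the triangle 𝒯 = {(σ̄, ȳ) ∈ [0,1]² : 0 ≤ ȳ ≤ σ̄ ≤ 1}. Then k is C¹ and satisfies ∂k/∂σ̄(σ̄,ȳ) + ∂k/∂ȳ(σ̄,ȳ) = 0 on 𝒯, and for every σ̄ ∈ [0,1], k(σ̄, 0) = ∫₀^{σ̄} k(σ̄, ȳ) G(ȳ) dȳ − G(σ̄), where G(ȳ) = γ T e^{b(ρ₁ + ρ₂)} e^{2bT ȳ}. -/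
/-! The kernel depends on `σ̄ - ȳ` only, so the two partial derivatives cancel. Along `ȳ`, the
product `k(σ̄, ȳ) G(ȳ) = -c² e^{(2bT + c) σ̄} e^{-c ȳ}` has the antiderivative
`c e^{(2bT + c) σ̄ - c ȳ}`, whose increment over `[0, σ̄]` is `G(σ̄) + k(σ̄, 0)`. -/

open Real

theorem deriv_comp_sub_const_add_deriv_comp_const_sub {𝕜 F : Type*}
    [NontriviallyNormedField 𝕜] [NormedAddCommGroup F] [NormedSpace 𝕜 F] (f : 𝕜 → F) (s y : 𝕜) :
    deriv (fun s => f (s - y)) s + deriv (fun y => f (s - y)) y = 0 := by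
  rw [deriv_comp_sub_const, deriv_comp_const_sub, add_neg_cancel]

theorem integral_neg_mul_exp_mul_sub_mul_exp (c μ σ : ℝ) :
    ∫ y in (0 : ℝ)..σ, -c * exp ((μ + c) * (σ - y)) * (c * exp (μ * y))
      = c * exp (μ * σ) - c * exp ((μ + c) * σ) := by
  have antideriv : ∀ y ∈ Set.uIcc 0 σ,
      HasDerivAt (fun y => c * exp ((μ + c) * σ + -c * y))
        (-c * exp ((μ + c) * (σ - y)) * (c * exp (μ * y))) y := by
    intro y _
    refine (((hasDerivAt_id y).const_mul (-c)).const_add ((μ + c) * σ)).exp.const_mul c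
      |>.congr_deriv ?_
    rw [id, show (μ + c) * σ + -c * y = (μ + c) * (σ - y) + μ * y by ring, exp_add]
    ring
  rw [intervalIntegral.integral_eq_sub_of_hasDerivAt antideriv
      (Continuous.intervalIntegrable (by fun_prop) _ _),
    show (μ + c) * σ + -c * σ = μ * σ by ring]
  simp

theorem example_kernel_solves_kernel_equations_general
    (γ b T ρ₁ ρ₂ : ℝ)
    (c : ℝ) (hc : c = γ * T * Real.exp (b * (ρ₁ + ρ₂)))
    (k : ℝ → ℝ → ℝ)
    (hk : ∀ σbar ybar, k σbar ybar = -c * Real.exp ((2 * b * T + c) * (σbar - ybar))) :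
    ContDiffOn ℝ 1 (fun p : ℝ × ℝ => k p.1 p.2)
      {p : ℝ × ℝ | 0 ≤ p.2 ∧ p.2 ≤ p.1 ∧ p.1 ≤ 1} ∧
    (∀ σbar ybar : ℝ, 0 ≤ ybar → ybar ≤ σbar → σbar ≤ 1 →
      deriv (fun s => k s ybar) σbar + deriv (fun y => k σbar y) ybar = 0) ∧
    (∀ σbar ∈ Set.Icc (0:ℝ) 1,
      k σbar 0
        = (∫ ybar in (0:ℝ)..σbar,
            k σbar ybar * (γ * T * Real.exp (b * (ρ₁ + ρ₂)) * Real.exp (2 * b * T * ybar)))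
          - γ * T * Real.exp (b * (ρ₁ + ρ₂)) * Real.exp (2 * b * T * σbar)) := by
  obtain rfl : k = fun s y => -c * exp ((2 * b * T + c) * (s - y)) := funext₂ hk
  rw [← hc]
  refine ⟨ContDiff.contDiffOn (by fun_prop), fun σbar ybar _ _ _ => ?_, fun σbar _ => ?_⟩
  · exact deriv_comp_sub_const_add_deriv_comp_const_sub
      (fun t => -c * exp ((2 * b * T + c) * t)) σbar ybar
  · simp only [integral_neg_mul_exp_mul_sub_mul_exp, sub_zero]
    ring

/-- (The explicit kernel solves the kernel equations in the example.)
With `c = γ T e^{b(ρ₁+ρ₂)}` and `k(σ̄,ȳ) = -c exp((2bT + c)(σ̄ - ȳ))`, the kernel `k`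
is `C¹` on the triangle `𝒯 = {(σ̄,ȳ) : 0 ≤ ȳ ≤ σ̄ ≤ 1}`, satisfies
`∂k/∂σ̄ + ∂k/∂ȳ = 0` on `𝒯`, and for every `σ̄ ∈ [0,1]`,
`k(σ̄,0) = ∫₀^σ̄ k(σ̄,ȳ) G(ȳ) dȳ - G(σ̄)`, where `G(ȳ) = γ T e^{b(ρ₁+ρ₂)} e^{2bT ȳ}`. -/
theorem example_kernel_solves_kernel_equations
    (γ b T ρ₁ ρ₂ : ℝ) (hγ : 0 < γ) (hb : 0 < b) (hT : 0 < T)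
    (c : ℝ) (hc : c = γ * T * Real.exp (b * (ρ₁ + ρ₂)))
    (k : ℝ → ℝ → ℝ)
    (hk : ∀ σbar ybar, k σbar ybar = -c * Real.exp ((2 * b * T + c) * (σbar - ybar))) :
    ContDiffOn ℝ 1 (fun p : ℝ × ℝ => k p.1 p.2)
      {p : ℝ × ℝ | 0 ≤ p.2 ∧ p.2 ≤ p.1 ∧ p.1 ≤ 1} ∧
    (∀ σbar ybar : ℝ, 0 ≤ ybar → ybar ≤ σbar → σbar ≤ 1 →
      deriv (fun s => k s ybar) σbar + deriv (fun y => k σbar y) ybar = 0) ∧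
    (∀ σbar ∈ Set.Icc (0:ℝ) 1,
      k σbar 0
        = (∫ ybar in (0:ℝ)..σbar,
            k σbar ybar * (γ * T * Real.exp (b * (ρ₁ + ρ₂)) * Real.exp (2 * b * T * ybar)))
          - γ * T * Real.exp (b * (ρ₁ + ρ₂)) * Real.exp (2 * b * T * σbar)) :=
  example_kernel_solves_kernel_equations_general γ b T ρ₁ ρ₂ c hc k hk
end
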